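/- arXiv:1304.5707 — 10 statements merged into one kernel-verified Lean document; each statement's English description precedes it below -/
import Mathlib

section
/- The characteristic polynomial of a real skew-symmetric n×n matrix has zero coefficient on λ^{n-i} for every odd i. -/
open Matrix Polynomial

lemma my_charpoly_transpose {n : ℕ} (M : Matrix (Fin n) (Fin n) ℝ) :
    Mᵀ.charpoly = M.charpoly := by
  rw [Matrix.charpoly, Matrix.charpoly, ← Matrix.det_transpose (charmatrix M)]
  congr 1
  ext i j
  by_cases h : i = j <;>
    simp [charmatrix_apply, Matrix.transpose_apply, Matrix.diagonal, h, eq_comm]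

lemma my_coeff_comp_neg_X {R : Type*} [CommRing R] (p : R[X]) (k : ℕ) :
    (p.comp (-X)).coeff k = (-1) ^ k * p.coeff k := by
  induction p using Polynomial.induction_on' with
  | add p q hp hq => simp [add_comp, hp, hq, mul_add]
  | monomial m a =>
    rw [monomial_comp]
    have hx : (-X : R[X]) ^ m = C ((-1 : R) ^ m) * X ^ m := by
      rw [neg_pow]; simp [map_pow]
    rw [hx, ← mul_assoc, ← C_mul, coeff_C_mul, coeff_monomial,
      coeff_X_pow]
    rcases eq_or_ne m k with rfl | h
    · simp [mul_comm]
    · simp [h, Ne.symm h]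

lemma my_charpoly_neg {n : ℕ} (M : Matrix (Fin n) (Fin n) ℝ) :
    (-M).charpoly.comp (-X) = (-1) ^ n * M.charpoly := by
  have : (-M).charpoly.comp (-X) = aeval (-X : ℝ[X]) ((-M).charpoly) := comp_eq_aeval
  rw [this, Matrix.charpoly, AlgHom.map_det]
  have hmat : (aeval (-X : ℝ[X])).mapMatrix (charmatrix (-M)) = -(charmatrix M) := by
    ext i j
    by_cases h : i = j <;> [skip; skip] <;>
      · simp [charmatrix_apply, Matrix.diagonal, h]
        try ring
  rw [hmat, Matrix.det_neg, Matrix.charpoly]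
  simp [Fintype.card_fin]

/-- The characteristic polynomial `det(λI - S) = Σ_{i=0}^n c_i λ^{n-i}` of a real
skew-symmetric `n × n` matrix has `c_i = 0` for every odd `i`. -/
theorem charpoly_coeff_odd_eq_zero {n : ℕ}
    (S : Matrix (Fin n) (Fin n) ℝ) (hskew : Sᵀ = -S)
    (i : ℕ) (hi : i ≤ n) (hodd : Odd i) : S.charpoly.coeff (n - i) = 0 := by
  have h1 : S.charpoly = (-S).charpoly := by rw [← hskew, my_charpoly_transpose]
  have h2 : S.charpoly.comp (-X) = (-1) ^ n * S.charpoly := by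
    rw [h1, my_charpoly_neg, ← h1]
  rw [show ((-1 : ℝ[X]) ^ n) = C ((-1 : ℝ) ^ n) by simp] at h2
  have h3 := congrArg (fun p => Polynomial.coeff p (n - i)) h2
  simp only [my_coeff_comp_neg_X, coeff_C_mul] at h3
  set c := S.charpoly.coeff (n - i) with hc
  have hkey : (-1 : ℝ) ^ (n - i) = -(-1 : ℝ) ^ n := by
    have : (-1 : ℝ) ^ (n - i) * (-1) ^ i = (-1) ^ n := by
      rw [← pow_add, Nat.sub_add_cancel hi]
    rw [hodd.neg_one_pow] at this
    linarith
  rw [hkey] at h3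
  have hne : ((-1 : ℝ) ^ n) ≠ 0 := by positivity
  have : (-1 : ℝ) ^ n * c = 0 := by linarith
  rcases mul_eq_zero.mp this with h | h
  · exact absurd h hne
  · exact h
end

section
/- All coefficients of the characteristic polynomial of a real skew-symmetric matrix are nonnegative: if det(λI - S) = Σ_{i≥0} c_{2i} λ^{n-2i} then c_{2i} ≥ 0 for all 0 ≤ i ≤ ⌊n/2⌋. -/
/-!
If `S v = z v` with `v ≠ 0`, then `v* S v = z ‖v‖²` equals minus its own conjugate, so the
complex eigenvalues of a real skew-symmetric matrix are purely imaginary. A monic real polynomial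
whose complex roots all lie in the closed left half-plane has nonnegative coefficients: peeling
off a root `z` gives a real factor `X - z` or `X² - 2 Re z X + |z|²`, both with nonnegative
coefficients, and such polynomials are closed under products.
-/

open Matrix Polynomial

namespace Polynomial

section OrderedSemiring

variable (R : Type*) [Semiring R] [PartialOrder R] [IsOrderedRing R]

def nonnegCoeffs : Subsemiring R[X] where
  carrier := {p | ∀ k, 0 ≤ p.coeff k}
  mul_mem' {p q} hp hq k := by
    rw [coeff_mul]
    exact Finset.sum_nonneg fun ij _ => mul_nonneg (hp ij.1) (hq ij.2)
  one_mem' k := by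
    rw [coeff_one]
    split_ifs <;> simp
  add_mem' {p q} hp hq k := by
    rw [coeff_add]
    exact add_nonneg (hp k) (hq k)
  zero_mem' k := by simp

variable {R}

theorem mem_nonnegCoeffs {p : R[X]} : p ∈ nonnegCoeffs R ↔ ∀ k, 0 ≤ p.coeff k := Iff.rfl

theorem C_mem_nonnegCoeffs {c : R} (hc : 0 ≤ c) : C c ∈ nonnegCoeffs R := fun k => by
  rw [coeff_C]
  split_ifs
  exacts [hc, le_rfl]

theorem X_mem_nonnegCoeffs : (X : R[X]) ∈ nonnegCoeffs R := fun k => by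
  rw [coeff_X]
  split_ifs <;> simp

end OrderedSemiring

theorem exists_monic_dvd_mem_nonnegCoeffs_of_aeval_eq_zero (p : ℝ[X]) {z : ℂ}
    (h0 : aeval z p = 0) (hz : z.re ≤ 0) :
    ∃ g : ℝ[X], g.Monic ∧ 0 < g.natDegree ∧ g ∣ p ∧ g ∈ nonnegCoeffs ℝ := by
  by_cases him : z.im = 0
  · obtain ⟨r, rfl⟩ : ∃ r : ℝ, (r : ℂ) = z := ⟨z.re, Complex.ext rfl him.symm⟩
    refine ⟨X - C r, monic_X_sub_C r, by simp, dvd_iff_isRoot.mpr ?_, ?_⟩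
    · rw [← Complex.coe_algebraMap, aeval_algebraMap_apply_eq_algebraMap_eval] at h0
      exact Complex.ofReal_eq_zero.mp h0
    · rw [sub_eq_add_neg, ← C_neg]
      exact add_mem X_mem_nonnegCoeffs (C_mem_nonnegCoeffs (by simpa using hz))
  · refine ⟨X ^ 2 - C (2 * z.re) * X + C (‖z‖ ^ 2), ?_, ?_,
      p.quadratic_dvd_of_aeval_eq_zero_im_ne_zero h0 him, ?_⟩
    · monicity!
    · rw [show natDegree _ = 2 by compute_degree!]
      norm_num
    · rw [sub_eq_add_neg, ← neg_mul, ← C_neg]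
      refine add_mem (add_mem (pow_mem X_mem_nonnegCoeffs 2) (mul_mem ?_ X_mem_nonnegCoeffs))
        (C_mem_nonnegCoeffs (by positivity))
      exact C_mem_nonnegCoeffs (by linarith)

theorem Monic.mem_nonnegCoeffs_of_forall_aeval_eq_zero_re_nonpos {p : ℝ[X]} (hp : p.Monic)
    (hroots : ∀ z : ℂ, aeval z p = 0 → z.re ≤ 0) : p ∈ nonnegCoeffs ℝ := by
  induction h : p.natDegree using Nat.strong_induction_on generalizing p with
  | _ d ih =>
    rcases Nat.eq_zero_or_pos d with rfl | hd
    · rw [hp.natDegree_eq_zero.mp h]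
      exact one_mem _
    obtain ⟨z, hz⟩ := IsAlgClosed.exists_aeval_eq_zero ℂ p (by
      rw [degree_eq_natDegree hp.ne_zero, h]; exact_mod_cast hd.ne')
    obtain ⟨g, hg, hg_deg, ⟨q, rfl⟩, hg_mem⟩ :=
      exists_monic_dvd_mem_nonnegCoeffs_of_aeval_eq_zero p hz (hroots z hz)
    have hq := hg.of_mul_monic_left hp
    refine mul_mem hg_mem (ih q.natDegree ?_ hq (fun w hw => hroots w (by simp [hw])) rfl)
    rw [← h, hg.natDegree_mul hq]
    omega

end Polynomial

namespace Matrix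

open scoped ComplexOrder

variable {n : Type*} [Fintype n] [DecidableEq n]

theorem re_eq_zero_of_isRoot_charpoly_of_conjTranspose_eq_neg {A : Matrix n n ℂ}
    (hA : Aᴴ = -A) {z : ℂ} (hz : A.charpoly.IsRoot z) : z.re = 0 := by
  obtain ⟨v, hv, hAv⟩ := exists_mulVec_eq_zero_iff.mpr (A.eval_charpoly z ▸ hz.eq_zero)
  have hAv : A *ᵥ v = z • v := by
    rw [sub_mulVec, scalar_apply, ← smul_one_eq_diagonal, smul_mulVec, one_mulVec,
      sub_eq_zero] at hAv
    exact hAv.symm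
  have hform_star : star (star v ⬝ᵥ (A *ᵥ v)) = -(star v ⬝ᵥ (A *ᵥ v)) :=
    calc star (star v ⬝ᵥ (A *ᵥ v)) = star (A *ᵥ v) ⬝ᵥ v := (star_dotProduct _ _).symm
      _ = star v ⬝ᵥ (Aᴴ *ᵥ v) := by rw [star_mulVec, dotProduct_mulVec]
      _ = -(star v ⬝ᵥ (A *ᵥ v)) := by rw [hA, neg_mulVec, dotProduct_neg]
  obtain ⟨hv_re, hv_im⟩ := Complex.pos_iff.mp (dotProduct_star_self_pos_iff.mpr hv)
  rw [hAv, dotProduct_smul, smul_eq_mul] at hform_star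
  have hre := congrArg Complex.re hform_star
  simp only [Complex.star_def, Complex.conj_re, Complex.neg_re, Complex.mul_re, ← hv_im,
    mul_zero, sub_zero] at hre
  exact (mul_eq_zero.mp (by linarith : z.re * (star v ⬝ᵥ v).re = 0)).resolve_right hv_re.ne'

end Matrix

theorem charpoly_coeff_nonneg_general {n : ℕ}
    (S : Matrix (Fin n) (Fin n) ℝ) (hskew : Sᵀ = -S)
    (i : ℕ) : 0 ≤ S.charpoly.coeff (n - 2 * i) := by
  have hA : (S.map (algebraMap ℝ ℂ))ᴴ = -S.map (algebraMap ℝ ℂ) := by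
    rw [← conjTranspose_map (algebraMap ℝ ℂ) (fun x => by simp),
      conjTranspose_eq_transpose_of_trivial, hskew, Matrix.map_neg _ (map_neg _)]
  have hroots (z : ℂ) (hz : aeval z S.charpoly = 0) : z.re ≤ 0 :=
    (re_eq_zero_of_isRoot_charpoly_of_conjTranspose_eq_neg hA
      (by rwa [charpoly_map, IsRoot, eval_map_algebraMap])).le
  exact mem_nonnegCoeffs.mp
    (S.charpoly_monic.mem_nonnegCoeffs_of_forall_aeval_eq_zero_re_nonpos hroots) _

/-- All coefficients of the characteristic polynomial of a real skew-symmetric matrix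
are nonnegative: writing `det(λI - S) = Σ_{i≥0} c_{2i} λ^{n-2i}`, we have `c_{2i} ≥ 0`
for all `0 ≤ i ≤ ⌊n/2⌋`. -/
theorem charpoly_coeff_nonneg {n : ℕ}
    (S : Matrix (Fin n) (Fin n) ℝ) (hskew : Sᵀ = -S)
    (i : ℕ) (hi : 2 * i ≤ n) : 0 ≤ S.charpoly.coeff (n - 2 * i) :=
  charpoly_coeff_nonneg_general S hskew i
end

section
/- For an n×n real skew-symmetric matrix S with eigenvalues λ_1,…,λ_n (with multiplicity) and p = |det S| = ∏|λ_j|, the sum of the norms of the eigenvalues satisfies √(trace(S^T S) + n(n-1) p^{2/n}) ≤ Σ_j |λ_j| ≤ √(n · trace(S^T S)). -/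
open Matrix Polynomial

/-- The skew energy: the sum of the norms of the eigenvalues (with multiplicity). -/
noncomputable def skewEnergy {V : Type*} [Fintype V] [DecidableEq V]
    (S : Matrix V V ℝ) : ℝ :=
  (((S.map Complex.ofReal).charpoly.roots).map (fun z => ‖z‖)).sum

/-!
Multiplying the real skew-symmetric `S` by `i` gives a Hermitian matrix with real eigenvalues
`μ_j`, so the eigenvalues of `S` are the `-i μ_j`: the skew energy is `∑ |μ_j|`, while
`trace (Sᵀ S) = ∑ μ_j ^ 2` and `|det S| = ∏ |μ_j|`. The upper bound is then Cauchy–Schwarz. For the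
lower bound, `(∑ |μ_j|) ^ 2` exceeds `∑ μ_j ^ 2` by the `n (n - 1)` off-diagonal products
`|μ_j| |μ_k|`, whose product is `(∏ |μ_j|) ^ (2 (n - 1))`, so AM–GM bounds their sum below by
`n (n - 1) |det S| ^ (2 / n)`.
-/

open Finset

namespace Finset

variable {ι : Type*} [DecidableEq ι]

theorem sq_sum_eq_sum_sq_add_sum_offDiag {R : Type*} [CommSemiring R] (s : Finset ι)
    (a : ι → R) :
    (∑ i ∈ s, a i) ^ 2 = ∑ i ∈ s, a i ^ 2 + ∑ p ∈ s.offDiag, a p.1 * a p.2 := by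
  rw [sq, sum_mul_sum, ← sum_product', ← diag_union_offDiag,
    sum_union (disjoint_diag_offDiag s), sum_diag]
  simp only [sq]

theorem prod_offDiag_mul_eq_prod_pow {M : Type*} [CommMonoid M] (s : Finset ι) (a : ι → M) :
    ∏ p ∈ s.offDiag, a p.1 * a p.2 = (∏ i ∈ s, a i) ^ (2 * (#s - 1)) := by
  have hfst : ∏ p ∈ s.offDiag, a p.1 = (∏ i ∈ s, a i) ^ (#s - 1) := by
    rw [prod_finset_product' s.offDiag s s.erase (fun p => by grind) (f := fun i _ => a i),
      ← prod_pow]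
    exact prod_congr rfl fun i hi => by rw [prod_const, card_erase_of_mem hi]
  have hswap : ∏ p ∈ s.offDiag, a p.2 = ∏ p ∈ s.offDiag, a p.1 :=
    prod_equiv (Equiv.prodComm ι ι) (fun p => by grind) fun _ _ => rfl
  rw [prod_mul_distrib, hswap, hfst, ← pow_add, two_mul]

end Finset

namespace Real

variable {ι : Type*} [DecidableEq ι]

theorem mul_prod_rpow_two_div_card_le_sum_offDiag (s : Finset ι) {a : ι → ℝ}
    (ha : ∀ i ∈ s, 0 ≤ a i) :
    (#s : ℝ) * (#s - 1) * (∏ i ∈ s, a i) ^ ((2 : ℝ) / #s) ≤ ∑ p ∈ s.offDiag, a p.1 * a p.2 := by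
  have hpair : ∀ p ∈ s.offDiag, 0 ≤ a p.1 * a p.2 := fun p hp =>
    mul_nonneg (ha _ (mem_offDiag.1 hp).1) (ha _ (mem_offDiag.1 hp).2.1)
  obtain hs | hs := le_or_gt #s 1
  · have : (#s : ℝ) * (#s - 1) = 0 := by
      interval_cases h : #s <;> simp
    rw [this, zero_mul]
    exact sum_nonneg hpair
  have hcard : (#s.offDiag : ℝ) = #s * (#s - 1) := by
    rw [offDiag_card, Nat.cast_sub (Nat.le_mul_self _)]
    push_cast
    ring
  have hs' : (1 : ℝ) < #s := by exact_mod_cast hs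
  have hc : (0 : ℝ) < #s * (#s - 1) := by nlinarith
  have hP : 0 ≤ ∏ i ∈ s, a i := prod_nonneg ha
  have hamgm := geom_mean_le_arith_mean s.offDiag (fun _ => 1) (fun p => a p.1 * a p.2)
    (fun _ _ => zero_le_one) (by simp only [sum_const, nsmul_eq_mul, mul_one, hcard, hc]) hpair
  simp only [rpow_one, one_mul, sum_const, nsmul_eq_mul, mul_one, hcard,
    prod_offDiag_mul_eq_prod_pow] at hamgm
  have hexp : ((2 * (#s - 1) : ℕ) : ℝ) * ((#s : ℝ) * (#s - 1))⁻¹ = 2 / #s := by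
    rw [Nat.cast_mul, Nat.cast_sub hs.le, Nat.cast_ofNat, Nat.cast_one]
    field_simp [sub_ne_zero.2 hs'.ne']
  rwa [← rpow_natCast, ← rpow_mul hP, hexp, le_div_iff₀' hc] at hamgm

theorem sum_sq_add_mul_prod_rpow_le_sq_sum (s : Finset ι) {a : ι → ℝ}
    (ha : ∀ i ∈ s, 0 ≤ a i) :
    ∑ i ∈ s, a i ^ 2 + #s * (#s - 1) * (∏ i ∈ s, a i) ^ ((2 : ℝ) / #s) ≤ (∑ i ∈ s, a i) ^ 2 := by
  rw [sq_sum_eq_sum_sq_add_sum_offDiag]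
  exact add_le_add le_rfl (mul_prod_rpow_two_div_card_le_sum_offDiag s ha)

end Real

namespace Matrix.IsHermitian

variable {𝕜 n : Type*} [RCLike 𝕜] [Fintype n] [DecidableEq n] {A : Matrix n n 𝕜}

theorem charpoly_smul_eq (hA : A.IsHermitian) (c : 𝕜) :
    (c • A).charpoly = ∏ i, (X - C (c * hA.eigenvalues i)) := by
  conv_lhs => rw [hA.spectral_theorem, ← map_smul, Unitary.conjStarAlgAut_apply, charpoly_mul_comm,
    ← mul_assoc]
  simp [charpoly_diagonal, ← diagonal_smul]

theorem roots_charpoly_smul_eq (hA : A.IsHermitian) (c : 𝕜) :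
    (c • A).charpoly.roots = univ.val.map fun i => c * hA.eigenvalues i := by
  rw [hA.charpoly_smul_eq, roots_prod _ _ (prod_ne_zero_iff.2 fun i _ => X_sub_C_ne_zero _)]
  simp only [roots_X_sub_C, Multiset.bind_singleton]

theorem trace_mul_self_eq_sum_sq (hA : A.IsHermitian) :
    (A * A).trace = ∑ i, (hA.eigenvalues i : 𝕜) ^ 2 := by
  conv_lhs => rw [hA.spectral_theorem, ← map_mul, Unitary.conjStarAlgAut_apply, trace_mul_cycle]
  simp [diagonal_mul_diagonal, sq]

end Matrix.IsHermitian

theorem Complex.neg_I_smul_I_smul {M : Type*} [AddCommGroup M] [Module ℂ M] (x : M) :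
    -Complex.I • Complex.I • x = x := by
  rw [smul_smul, neg_mul, Complex.I_mul_I, neg_neg, one_smul]

namespace Matrix

theorem conjTranspose_map_ofReal {m n : Type*} (S : Matrix m n ℝ) :
    (S.map Complex.ofReal)ᴴ = Sᵀ.map Complex.ofReal := by
  rw [← conjTranspose_map _ fun _ => by simp, conjTranspose_eq_transpose_of_trivial]

theorem isHermitian_I_smul_map_ofReal {n : Type*} {S : Matrix n n ℝ} (hS : Sᵀ = -S) :
    (Complex.I • S.map Complex.ofReal).IsHermitian := by
  rw [IsHermitian, conjTranspose_smul, conjTranspose_map_ofReal, hS,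
    Matrix.map_neg _ Complex.ofReal_neg, smul_neg, ← neg_smul, Complex.star_def, Complex.conj_I,
    neg_neg]

variable {V : Type*} [Fintype V] [DecidableEq V] {S : Matrix V V ℝ}
  (hA : (Complex.I • S.map Complex.ofReal).IsHermitian)
include hA

theorem skewEnergy_eq_sum_abs_eigenvalues : skewEnergy S = ∑ i, |hA.eigenvalues i| := by
  conv_lhs => rw [skewEnergy, ← Complex.neg_I_smul_I_smul (S.map Complex.ofReal),
    hA.roots_charpoly_smul_eq, Multiset.map_map]
  change ∑ i, ‖-Complex.I * hA.eigenvalues i‖ = _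
  simp

theorem trace_transpose_mul_self_eq_sum_sq_eigenvalues :
    (Sᵀ * S).trace = ∑ i, hA.eigenvalues i ^ 2 := by
  have h : (Sᵀ * S).map Complex.ofReal =
      (Complex.I • S.map Complex.ofReal)ᴴ * (Complex.I • S.map Complex.ofReal) := by
    rw [conjTranspose_smul, conjTranspose_map_ofReal, smul_mul_smul, Complex.star_def,
      Complex.conj_I, neg_mul, Complex.I_mul_I, neg_neg, one_smul]
    exact Matrix.map_mul (f := Complex.ofRealHom)
  apply Complex.ofReal_injective
  calc ((Sᵀ * S).trace : ℂ) = ((Sᵀ * S).map Complex.ofReal).trace := by simp [trace]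
    _ = (Complex.I • S.map Complex.ofReal * Complex.I • S.map Complex.ofReal).trace := by
      rw [h, hA.eq]
    _ = _ := by rw [hA.trace_mul_self_eq_sum_sq]; push_cast; rfl

theorem abs_det_eq_prod_abs_eigenvalues : |S.det| = ∏ i, |hA.eigenvalues i| :=
  calc |S.det| = ‖(S.map Complex.ofReal).det‖ := by
        rw [← Real.norm_eq_abs, ← Complex.norm_real]
        exact congrArg norm (RingHom.map_det Complex.ofRealHom S)
    _ = ‖(-Complex.I • Complex.I • S.map Complex.ofReal).det‖ := by
        rw [Complex.neg_I_smul_I_smul]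
    _ = ∏ i, |hA.eigenvalues i| := by
        rw [det_smul, hA.det_eq_prod_eigenvalues]
        simp [norm_prod]

end Matrix

theorem skewEnergy_bounds_general {n : ℕ}
    (S : Matrix (Fin n) (Fin n) ℝ) (hskew : Sᵀ = -S) :
    Real.sqrt ((Sᵀ * S).trace + (n : ℝ) * ((n : ℝ) - 1) * |S.det| ^ ((2 : ℝ) / n)) ≤
        skewEnergy S ∧
      skewEnergy S ≤ Real.sqrt ((n : ℝ) * (Sᵀ * S).trace) := by
  have hA := isHermitian_I_smul_map_ofReal hskew
  have hE := skewEnergy_eq_sum_abs_eigenvalues hA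
  have htr : (Sᵀ * S).trace = ∑ i, |hA.eigenvalues i| ^ 2 := by
    simpa only [sq_abs] using trace_transpose_mul_self_eq_sum_sq_eigenvalues hA
  constructor
  · rw [Real.sqrt_le_iff, htr, abs_det_eq_prod_abs_eigenvalues hA, hE]
    refine ⟨sum_nonneg fun i _ => abs_nonneg _, ?_⟩
    simpa using
      Real.sum_sq_add_mul_prod_rpow_le_sq_sum univ fun i _ => abs_nonneg (hA.eigenvalues i)
  · refine Real.le_sqrt_of_sq_le ?_
    rw [hE, htr]
    simpa using sq_sum_le_card_mul_sum_sq (s := univ) (f := fun i => |hA.eigenvalues i|)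

/-- For an `n × n` real skew-symmetric matrix `S` with `p = |det S|`, the sum of the
norms of the eigenvalues satisfies
`√(trace(SᵀS) + n(n-1) p^(2/n)) ≤ Σ|λ_j| ≤ √(n · trace(SᵀS))`. -/
theorem skewEnergy_bounds {n : ℕ} (hn : 0 < n)
    (S : Matrix (Fin n) (Fin n) ℝ) (hskew : Sᵀ = -S) :
    Real.sqrt ((Sᵀ * S).trace + (n : ℝ) * ((n : ℝ) - 1) * |S.det| ^ ((2 : ℝ) / n)) ≤
        skewEnergy S ∧
      skewEnergy S ≤ Real.sqrt ((n : ℝ) * (Sᵀ * S).trace) :=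
  skewEnergy_bounds_general S hskew
end

section
/- If S is a real skew-symmetric n×n matrix with entries in {0, ±1} satisfying S^T S = k I_n with k odd, then the underlying graph condition |N(u) ∩ N(v)| is even holds for any two distinct vertices u and v; i.e., for any two distinct rows of S, the number of columns where both rows are nonzero is even. -/
open Matrix

/-- If `S` is a real skew-symmetric matrix with entries in `{0, ±1}` satisfying
`SᵀS = k I` with `k` odd, then for any two distinct rows `u ≠ v`, the number of columns
where both rows are nonzero (i.e. `|N(u) ∩ N(v)|` in the underlying graph) is even. -/
theorem common_neighbors_even {n : ℕ}
    (S : Matrix (Fin n) (Fin n) ℝ) (hskew : Sᵀ = -S)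
    (hentries : ∀ i j, S i j = 0 ∨ S i j = 1 ∨ S i j = -1)
    (k : ℕ) (hk : Odd k)
    (hS : Sᵀ * S = (k : ℝ) • (1 : Matrix (Fin n) (Fin n) ℝ))
    (u v : Fin n) (huv : u ≠ v) :
    Even (Finset.univ.filter (fun w => S u w ≠ 0 ∧ S v w ≠ 0)).card := by
  set T := Finset.univ.filter (fun w => S u w ≠ 0 ∧ S v w ≠ 0) with hT
  -- the sum of products of rows u and v vanishes
  have h0 : ∑ w, S u w * S v w = 0 := by
    have e : S * Sᵀ = Sᵀ * S := by
      rw [hskew, Matrix.neg_mul, Matrix.mul_neg]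
    have h1 : (S * Sᵀ) u v = 0 := by
      rw [e, hS]
      simp [Matrix.one_apply_ne huv]
    simpa [Matrix.mul_apply, Matrix.transpose_apply] using h1
  -- restrict the sum to T
  have hsum : ∑ w ∈ T, S u w * S v w = 0 := by
    rw [← h0]
    apply Finset.sum_subset (Finset.subset_univ _)
    intro w _ hw
    simp only [hT, Finset.mem_filter, Finset.mem_univ, true_and, not_and_or, not_not] at hw
    rcases hw with h | h <;> simp [h]
  -- each term on T is ±1
  set P := T.filter (fun w => S u w * S v w = 1) with hP
  set N := T.filter (fun w => ¬ S u w * S v w = 1) with hN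
  have hcard : P.card + N.card = T.card := Finset.card_filter_add_card_filter_not _
  have hNval : ∀ w ∈ N, S u w * S v w = -1 := by
    intro w hw
    simp only [hN, hT, Finset.mem_filter, Finset.mem_univ, true_and] at hw
    obtain ⟨⟨hu, hv⟩, hne⟩ := hw
    rcases hentries u w with h1 | h1 | h1 <;> rcases hentries v w with h2 | h2 | h2 <;>
      simp_all
  have hPval : ∀ w ∈ P, S u w * S v w = 1 := by
    intro w hw
    simp only [hP, Finset.mem_filter] at hw
    exact hw.2
  have hsplit : ∑ w ∈ T, S u w * S v w = (P.card : ℝ) - (N.card : ℝ) := by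
    rw [← Finset.sum_filter_add_sum_filter_not T (fun w => S u w * S v w = 1)]
    rw [Finset.sum_congr rfl hPval, Finset.sum_congr rfl hNval]
    simp [sub_eq_add_neg]
  have hPN : (P.card : ℝ) = (N.card : ℝ) := by
    have := hsum
    rw [hsplit] at this
    linarith
  have hPNnat : P.card = N.card := Nat.cast_injective hPN
  refine ⟨P.card, ?_⟩
  omega
end

section
/- If S_1, S_2, S_3 are real skew-symmetric matrices of orders n_1, n_2, n_3 with S_j^T S_j = k_j I for j = 1,2,3, then the Kronecker product S_1 ⊗ S_2 ⊗ S_3 is skew-symmetric and satisfies (S_1 ⊗ S_2 ⊗ S_3)^T (S_1 ⊗ S_2 ⊗ S_3) = k_1 k_2 k_3 I; hence the corresponding oriented graph has optimum skew energy n_1 n_2 n_3 √(k_1 k_2 k_3). -/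
/-!
Transposition and multiplication of Kronecker products act factorwise, so the product of three
skew-symmetric factors is skew-symmetric with `Tᵀ T = k₁k₂k₃ I`. For a skew-symmetric `S` with
`Sᵀ S = k I` we get `S² = -k I`, so every eigenvalue `μ` has `μ² = -k`, i.e. `‖μ‖ = √k`, and the
`n` eigenvalues contribute `n √k` to the skew energy.
-/

open Matrix Polynomial
open scoped Kronecker

namespace Matrix

theorem neg_kronecker {R : Type*} [Ring R] {l m n p : Type*} (A : Matrix l m R)
    (B : Matrix n p R) : (-A) ⊗ₖ B = -(A ⊗ₖ B) := by
  ext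
  simp [neg_mul]

theorem kronecker_neg {R : Type*} [Ring R] {l m n p : Type*} (A : Matrix l m R)
    (B : Matrix n p R) : A ⊗ₖ (-B) = -(A ⊗ₖ B) := by
  ext
  simp [mul_neg]

variable {n : Type*} [Fintype n] [DecidableEq n]

theorem transpose_mul_self_kronecker {R : Type*} [CommRing R] {m : Type*} [Fintype m]
    [DecidableEq m] {A : Matrix m m R} {B : Matrix n n R} {a b : R}
    (hA : Aᵀ * A = a • 1) (hB : Bᵀ * B = b • 1) :
    (A ⊗ₖ B)ᵀ * (A ⊗ₖ B) = (a * b) • 1 := by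
  rw [← kroneckerMap_transpose, ← mul_kronecker_mul, hA, hB, smul_kronecker, kronecker_smul,
    one_kronecker_one, smul_smul]

/-- Spectral mapping for `X ^ 2`: the spectrum of the scalar matrix `c • 1` is `{c}`. -/
theorem sq_eq_of_mem_roots_charpoly {K : Type*} [Field K] {M : Matrix n n K} {c : K}
    (hM : M * M = c • 1) {μ : K} (hμ : μ ∈ M.charpoly.roots) : μ ^ 2 = c := by
  have hspec : μ ∈ spectrum K M := mem_spectrum_of_isRoot_charpoly (isRoot_of_mem_roots hμ)
  have hsq : μ ^ 2 ∈ spectrum K (algebraMap K (Matrix n n K) c) := by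
    simpa [sq, hM, Algebra.algebraMap_eq_smul_one] using spectrum.pow_mem_pow M 2 hspec
  rcases subsingleton_or_nontrivial (Matrix n n K) with _ | _
  · simp [spectrum.of_subsingleton] at hsq
  · simpa [spectrum.scalar_eq] using hsq

theorem sum_norm_roots_charpoly_of_mul_self_eq_smul_one {M : Matrix n n ℂ} {c : ℂ}
    (hM : M * M = c • 1) :
    (M.charpoly.roots.map (‖·‖)).sum = Fintype.card n * √‖c‖ := by
  have hnorm : ∀ μ ∈ M.charpoly.roots, ‖μ‖ = √‖c‖ := fun μ hμ => by
    rw [← sq_eq_of_mem_roots_charpoly hM hμ, norm_pow, Real.sqrt_sq (norm_nonneg μ)]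
  rw [Multiset.map_congr rfl hnorm, Multiset.map_const', Multiset.sum_replicate,
    IsAlgClosed.card_roots_eq_natDegree, charpoly_natDegree_eq_dim, nsmul_eq_mul]

end Matrix

theorem skewEnergy_of_transpose_mul_self {V : Type*} [Fintype V] [DecidableEq V]
    {S : Matrix V V ℝ} {k : ℝ} (hS : Sᵀ = -S) (hk : Sᵀ * S = k • 1) (hk0 : 0 ≤ k) :
    skewEnergy S = Fintype.card V * √k := by
  have hSS : S.map Complex.ofReal * S.map Complex.ofReal = (-(k : ℂ)) • 1 := by
    show S.map Complex.ofRealHom * S.map Complex.ofRealHom = _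
    rw [← Matrix.map_mul, ← neg_neg (S * S), ← neg_mul, ← hS, hk]
    ext i j
    by_cases h : i = j <;> simp [h]
  rw [skewEnergy, sum_norm_roots_charpoly_of_mul_self_eq_smul_one hSS, norm_neg,
    Complex.norm_real, Real.norm_of_nonneg hk0]

/-- If `S₁, S₂, S₃` are real skew-symmetric matrices of orders `n₁, n₂, n₃` with
`Sⱼᵀ Sⱼ = kⱼ I`, then the Kronecker product `S₁ ⊗ S₂ ⊗ S₃` is skew-symmetric and
satisfies `(S₁⊗S₂⊗S₃)ᵀ (S₁⊗S₂⊗S₃) = k₁k₂k₃ I`; hence the corresponding oriented graph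
has optimum skew energy `n₁ n₂ n₃ √(k₁ k₂ k₃)`. -/
theorem kronecker_three_optimum {n₁ n₂ n₃ : ℕ}
    (S₁ : Matrix (Fin n₁) (Fin n₁) ℝ) (S₂ : Matrix (Fin n₂) (Fin n₂) ℝ)
    (S₃ : Matrix (Fin n₃) (Fin n₃) ℝ)
    (h₁ : S₁ᵀ = -S₁) (h₂ : S₂ᵀ = -S₂) (h₃ : S₃ᵀ = -S₃)
    (k₁ k₂ k₃ : ℕ)
    (hk₁ : S₁ᵀ * S₁ = (k₁ : ℝ) • 1) (hk₂ : S₂ᵀ * S₂ = (k₂ : ℝ) • 1)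
    (hk₃ : S₃ᵀ * S₃ = (k₃ : ℝ) • 1) :
    (S₁ ⊗ₖ S₂ ⊗ₖ S₃)ᵀ = -(S₁ ⊗ₖ S₂ ⊗ₖ S₃) ∧
    (S₁ ⊗ₖ S₂ ⊗ₖ S₃)ᵀ * (S₁ ⊗ₖ S₂ ⊗ₖ S₃) = ((k₁ * k₂ * k₃ : ℕ) : ℝ) • 1 ∧
    skewEnergy (S₁ ⊗ₖ S₂ ⊗ₖ S₃) =
      ((n₁ * n₂ * n₃ : ℕ) : ℝ) * Real.sqrt ((k₁ * k₂ * k₃ : ℕ) : ℝ) := by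
  have hskew : (S₁ ⊗ₖ S₂ ⊗ₖ S₃)ᵀ = -(S₁ ⊗ₖ S₂ ⊗ₖ S₃) := by
    rw [← kroneckerMap_transpose, ← kroneckerMap_transpose, h₁, h₂, h₃]
    simp only [neg_kronecker, kronecker_neg, neg_neg]
  have hk : (S₁ ⊗ₖ S₂ ⊗ₖ S₃)ᵀ * (S₁ ⊗ₖ S₂ ⊗ₖ S₃) = ((k₁ * k₂ * k₃ : ℕ) : ℝ) • 1 := by
    rw [transpose_mul_self_kronecker (transpose_mul_self_kronecker hk₁ hk₂) hk₃]
    push_cast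
    rfl
  refine ⟨hskew, hk, ?_⟩
  rw [skewEnergy_of_transpose_mul_self hskew hk (Nat.cast_nonneg _)]
  simp [Fintype.card_prod]
end

section
/- The skew energy of any oriented cycle on an odd number n of vertices equals 2·cot(π/(2n)). -/
/-!
Write `s i = S i (i + 1)` and `ε = ∏ i, s i = ±1`. For every `θ` with `θ ^ n = ε` the recurrence
`v (i + 1) = θ * s i * v i` closes up around the cycle, and its solution is an eigenvector of `S`
with eigenvalue `θ - θ⁻¹`. For odd `n` these `n` values are distinct (`θ - θ⁻¹ = φ - φ⁻¹` forces
`θ = φ` or `θ φ = -1`, while `(θ φ) ^ n = 1 ≠ (-1) ^ n`), so they are all the eigenvalues.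
As `|θ| = 1`, `|θ - θ⁻¹| = |θ ^ 2 - 1|`, and `θ ^ 2` runs over the `n`-th roots of unity when `θ`
runs over the `n`-th roots of `ε`. The energy is therefore `∑ k < n, |e^(2πik/n) - 1|`
`= ∑ k < n, 2 sin (πk/n)`, and this sum telescopes to `2 cot (π/(2n))`.
-/

open Matrix Polynomial

open Real

theorem Real.two_mul_sin_mul_sum_range_sin_two_mul (x : ℝ) (n : ℕ) :
    2 * sin x * ∑ k ∈ Finset.range n, sin (2 * k * x) = cos x - cos ((2 * n - 1) * x) := by
  induction n with
  | zero => simp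
  | succ n ih =>
    have h : cos (x - 2 * n * x) = cos ((2 * n - 1) * x) := by rw [← cos_neg]; ring_nf
    rw [Finset.sum_range_succ, mul_add, ih, two_mul_sin_mul_sin, h]
    push_cast
    ring_nf

theorem Real.sum_range_sin_pi_mul_div (n : ℕ) (hn : n ≠ 0) :
    ∑ k ∈ Finset.range n, sin (π * k / n) = cot (π / (2 * n)) := by
  set x := π / (2 * n) with hx_def
  have hx : sin x ≠ 0 := by
    have : 0 < (n : ℝ) := by positivity
    refine (sin_pos_of_pos_of_lt_pi (by positivity) ?_).ne'
    rw [div_lt_iff₀ (by positivity)]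
    nlinarith [pi_pos, (by exact_mod_cast Nat.one_le_iff_ne_zero.mpr hn : (1 : ℝ) ≤ n)]
  have key := two_mul_sin_mul_sum_range_sin_two_mul x n
  have h2n : (2 * n - 1) * x = π - x := by rw [hx_def]; field_simp
  have hk : ∀ k : ℕ, π * k / n = 2 * k * x := fun k => by rw [hx_def]; field_simp
  rw [h2n, cos_pi_sub] at key
  simp only [hk, cot_eq_cos_div_sin]
  field_simp
  linarith

theorem Complex.norm_exp_two_pi_mul_I_div_pow_sub_one {n k : ℕ} (hk : k ≤ n) :
    ‖Complex.exp (2 * π * Complex.I / n) ^ k - 1‖ = 2 * Real.sin (π * k / n) := by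
  have harg : (k : ℂ) * (2 * π * Complex.I / n) = Complex.I * ↑(2 * π * k / n : ℝ) := by
    push_cast; ring
  rw [← Complex.exp_nat_mul, harg, Complex.norm_exp_I_mul_ofReal_sub_one]
  rcases Nat.eq_zero_or_pos n with rfl | hn
  · simp
  rw [show 2 * π * k / n / 2 = π * k / n by ring, norm_mul, Real.norm_two, Real.norm_of_nonneg]
  apply sin_nonneg_of_nonneg_of_le_pi (by positivity)
  rw [div_le_iff₀ (by positivity)]
  have : (k : ℝ) ≤ n := by exact_mod_cast hk
  nlinarith [pi_pos]

theorem Odd.pow_eq_self_of_sq_eq_one {M : Type*} [Monoid M] {n : ℕ} (hn : Odd n) {x : M}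
    (hx : x ^ 2 = 1) : x ^ n = x := by
  obtain ⟨m, rfl⟩ := hn
  rw [pow_succ, pow_mul, hx, one_pow, one_mul]

theorem norm_sub_inv_eq_norm_sq_sub_one {K : Type*} [NormedField K] {x : K} (hx : ‖x‖ = 1) :
    ‖x - x⁻¹‖ = ‖x ^ 2 - 1‖ := by
  have hx0 : x ≠ 0 := norm_ne_zero_iff.mp (by rw [hx]; exact one_ne_zero)
  rw [show x - x⁻¹ = x⁻¹ * (x ^ 2 - 1) by field_simp, norm_mul, norm_inv, hx, inv_one, one_mul]

theorem IsPrimitiveRoot.sum_range_pow_comp_eq {R M : Type*} [CommRing R] [IsDomain R]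
    [AddCommMonoid M] {n : ℕ} {η ω : R} (hη : IsPrimitiveRoot η n) (hω : IsPrimitiveRoot ω n)
    (f : R → M) : ∑ k ∈ Finset.range n, f (η ^ k) = ∑ k ∈ Finset.range n, f (ω ^ k) := by
  have key (ζ : R) (hζ : IsPrimitiveRoot ζ n) :
      ∑ k ∈ Finset.range n, f (ζ ^ k) = ((nthRoots n 1).map f).sum := by
    simp [hζ.nthRoots_eq (one_pow n), Multiset.map_map, Finset.sum_eq_multiset_sum]
  rw [key η hη, key ω hω]

theorem sub_inv_eq_sub_inv_iff {K : Type*} [Field K] {x y : K} (hx : x ≠ 0) (hy : y ≠ 0) :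
    x - x⁻¹ = y - y⁻¹ ↔ x = y ∨ x * y = -1 := by
  have key : x - x⁻¹ - (y - y⁻¹) = (x - y) * (x * y + 1) / (x * y) := by
    field_simp; ring
  rw [← sub_eq_zero, key, div_eq_zero_iff, mul_eq_zero, sub_eq_zero, add_eq_zero_iff_eq_neg,
    or_iff_left (mul_ne_zero hx hy)]

theorem injOn_sub_inv_nthRoots {K : Type*} [Field K] [NeZero (2 : K)] {n : ℕ} (hn : Odd n)
    {c : K} (hc : c ^ 2 = 1) : Set.InjOn (fun x : K => x - x⁻¹) {x | x ^ n = c} := by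
  have hc0 : c ≠ 0 := by rintro rfl; simp at hc
  have hn0 : n ≠ 0 := by rintro rfl; simp at hn
  intro x (hx : x ^ n = c) y (hy : y ^ n = c) hxy
  have hx0 : x ≠ 0 := by rintro rfl; exact hc0 (by rw [← hx, zero_pow hn0])
  have hy0 : y ≠ 0 := by rintro rfl; exact hc0 (by rw [← hy, zero_pow hn0])
  refine ((sub_inv_eq_sub_inv_iff hx0 hy0).mp hxy).resolve_right fun hxy1 => ?_
  have : (-1 : K) = 1 := by rw [← hn.neg_one_pow, ← hxy1, mul_pow, hx, hy, ← sq, hc]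
  exact two_ne_zero (by linear_combination -this : (2 : K) = 0)

theorem sum_map_norm_sub_inv_nthRoots {n : ℕ} (hodd : Odd n) {ε ω : ℂ} (hε : ε ^ 2 = 1)
    (hω : IsPrimitiveRoot ω n) :
    ((nthRoots n ε).map fun θ => ‖θ - θ⁻¹‖).sum = ∑ k ∈ Finset.range n, ‖ω ^ k - 1‖ := by
  have hω2 : IsPrimitiveRoot (ω ^ 2) n := hω.pow_of_coprime 2 (Nat.coprime_two_left.mpr hodd)
  have hnorm (k : ℕ) : ‖ω ^ k * ε‖ = 1 := by
    rw [norm_mul, norm_pow, Complex.norm_eq_one_of_pow_eq_one hω.pow_eq_one hodd.pos.ne',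
      Complex.norm_eq_one_of_pow_eq_one hε two_ne_zero, one_pow, one_mul]
  rw [hω.nthRoots_eq (hodd.pow_eq_self_of_sq_eq_one hε), Multiset.map_map, ← Finset.range_val,
    ← Finset.sum_eq_multiset_sum, ← hω2.sum_range_pow_comp_eq hω fun z => ‖z - 1‖]
  refine Finset.sum_congr rfl fun k _ => ?_
  rw [Function.comp_apply, norm_sub_inv_eq_norm_sq_sub_one (hnorm k), mul_pow, hε, mul_one,
    ← pow_mul, mul_comm, pow_mul]

theorem Matrix.isRoot_charpoly_of_mulVec_eq_smul {R ι : Type*} [CommRing R] [IsDomain R]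
    [Fintype ι] [DecidableEq ι] {A : Matrix ι ι R} {μ : R} {v : ι → R} (hv : v ≠ 0)
    (hAv : A *ᵥ v = μ • v) : A.charpoly.IsRoot μ := by
  rw [← charpoly_toLin', ← Module.End.hasEigenvalue_iff_isRoot_charpoly]
  exact Module.End.hasEigenvalue_of_hasEigenvector
    (Module.End.hasEigenvector_iff.mpr ⟨Module.End.mem_eigenspace_iff.mpr hAv, hv⟩)

theorem ZMod.add_one_ne_sub_one {n : ℕ} (hn : 3 ≤ n) (i : ZMod n) : i + 1 ≠ i - 1 := by
  intro h
  have h2 : ((2 : ℕ) : ZMod n) = 0 := by push_cast; linear_combination h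
  have := Nat.le_of_dvd two_pos ((ZMod.natCast_eq_zero_iff 2 n).mp h2)
  omega

theorem ZMod.prod_range_natCast {M : Type*} [CommMonoid M] {n : ℕ} [NeZero n] (f : ZMod n → M) :
    ∏ k ∈ Finset.range n, f k = ∏ i, f i :=
  Finset.prod_nbij' (fun k => k) ZMod.val (fun _ _ => Finset.mem_univ _)
    (fun i _ => Finset.mem_range.mpr i.val_lt)
    (fun _ hk => ZMod.val_cast_of_lt (Finset.mem_range.mp hk))
    (fun i _ => ZMod.natCast_zmod_val i) (fun _ _ => rfl)

theorem exists_ne_zero_forall_add_one_eq_mul {M : Type*} [CommMonoidWithZero M] [Nontrivial M]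
    {n : ℕ} [NeZero n] (c : ZMod n → M) (hc : ∏ i, c i = 1) :
    ∃ v : ZMod n → M, v ≠ 0 ∧ ∀ i, v (i + 1) = c i * v i := by
  set w : ℕ → M := fun k => ∏ j ∈ Finset.range k, c j with hw
  have hper : Function.Periodic w n := fun k => by
    simp only [hw, add_comm k n, Finset.prod_range_add, Nat.cast_add, ZMod.natCast_self, zero_add,
      ZMod.prod_range_natCast, hc, one_mul]
  have hw_cast (k : ℕ) : w (k : ZMod n).val = w k := by
    rw [ZMod.val_natCast, hper.map_mod_nat]
  refine ⟨fun i => w i.val, fun h => by simpa [hw] using congrFun h 0, fun i => ?_⟩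
  have hi : i + 1 = ((i.val + 1 : ℕ) : ZMod n) := by simp
  change w (i + 1).val = c i * w i.val
  rw [hi, hw_cast]
  simp only [hw, Finset.prod_range_succ, ZMod.natCast_zmod_val, mul_comm]

section OrientedCycle

variable {K : Type*} [Field K] {n : ℕ} [NeZero n] {A : Matrix (ZMod n) (ZMod n) K}

theorem sq_prod_cycle_eq_one (hsq : ∀ i, A i (i + 1) ^ 2 = 1) : (∏ i, A i (i + 1)) ^ 2 = 1 := by
  rw [← Finset.prod_pow, Finset.prod_eq_one fun i _ => hsq i]

theorem mulVec_apply_eq_of_cycle (hn : 3 ≤ n)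
    (hA : ∀ i j, ¬ (j = i + 1 ∨ i = j + 1) → A i j = 0) (v : ZMod n → K) (i : ZMod n) :
    (A *ᵥ v) i = A i (i + 1) * v (i + 1) + A i (i - 1) * v (i - 1) := by
  refine Fintype.sum_eq_add _ _ (ZMod.add_one_ne_sub_one hn i) fun j hj => ?_
  have hij : ¬ (j = i + 1 ∨ i = j + 1) :=
    fun h => h.elim hj.1 fun h' => hj.2 (eq_sub_of_add_eq h'.symm)
  exact mul_eq_zero_of_left (hA i j hij) _

theorem isRoot_charpoly_sub_inv_of_cycle (hn : 3 ≤ n)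
    (hA : ∀ i j, ¬ (j = i + 1 ∨ i = j + 1) → A i j = 0) (hskew : Aᵀ = -A)
    (hsq : ∀ i, A i (i + 1) ^ 2 = 1) {θ : K} (hθ : θ ^ n = ∏ i, A i (i + 1)) :
    A.charpoly.IsRoot (θ - θ⁻¹) := by
  have hε := sq_prod_cycle_eq_one hsq
  have hθ0 : θ ≠ 0 := by
    refine ne_zero_pow (NeZero.ne n) fun h => ?_
    rw [← hθ, h] at hε
    simp at hε
  obtain ⟨v, hv, hrec⟩ := exists_ne_zero_forall_add_one_eq_mul (fun i => θ * A i (i + 1)) (by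
    rw [Finset.prod_mul_distrib, Finset.prod_const, Finset.card_univ, ZMod.card, hθ, ← sq, hε])
  refine isRoot_charpoly_of_mulVec_eq_smul hv (funext fun i => ?_)
  have hback : A i (i - 1) = -A (i - 1) i := by simpa using congr_fun₂ hskew (i - 1) i
  have hprev := hrec (i - 1)
  rw [sub_add_cancel] at hprev
  rw [mulVec_apply_eq_of_cycle hn hA, hrec, hback, Pi.smul_apply, smul_eq_mul]
  linear_combination
    (θ * v i) * hsq i + θ⁻¹ * hprev + A (i - 1) i * v (i - 1) * inv_mul_cancel₀ hθ0

theorem roots_charpoly_of_cycle [NeZero (2 : K)] (hn : 3 ≤ n) (hodd : Odd n)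
    (hA : ∀ i j, ¬ (j = i + 1 ∨ i = j + 1) → A i j = 0) (hskew : Aᵀ = -A)
    (hsq : ∀ i, A i (i + 1) ^ 2 = 1) {ω : K} (hω : IsPrimitiveRoot ω n) :
    A.charpoly.roots = (nthRoots n (∏ i, A i (i + 1))).map fun θ => θ - θ⁻¹ := by
  set ε := ∏ i, A i (i + 1)
  have hε : ε ^ 2 = 1 := sq_prod_cycle_eq_one hsq
  have hnodup : ((nthRoots n ε).map fun θ => θ - θ⁻¹).Nodup := by
    refine (hω.nthRoots_nodup (by rintro h; simp [h] at hε)).map_on fun x hx y hy => ?_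
    exact injOn_sub_inv_nthRoots hodd hε ((mem_nthRoots (NeZero.pos n)).mp hx)
      ((mem_nthRoots (NeZero.pos n)).mp hy)
  refine (Multiset.eq_of_le_of_card_le ((Multiset.le_iff_subset hnodup).mpr fun μ hμ => ?_)
    ?_).symm
  · obtain ⟨θ, hθ, rfl⟩ := Multiset.mem_map.mp hμ
    exact (mem_roots (charpoly_monic A).ne_zero).mpr
      (isRoot_charpoly_sub_inv_of_cycle hn hA hskew hsq ((mem_nthRoots (NeZero.pos n)).mp hθ))
  · rw [Multiset.card_map, hω.card_nthRoots, if_pos ⟨ε, hodd.pow_eq_self_of_sq_eq_one hε⟩]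
    exact (card_roots' _).trans (by rw [charpoly_natDegree_eq_dim, ZMod.card])

end OrientedCycle

/-- The skew energy of any oriented cycle on an odd number `n ≥ 3` of vertices equals
`2 cot(π/(2n))`. -/
theorem skewEnergy_odd_cycle {n : ℕ} [NeZero n] (hn : 3 ≤ n) (hodd : Odd n)
    (S : Matrix (ZMod n) (ZMod n) ℝ) (hskew : Sᵀ = -S)
    (hcyc : ∀ i j : ZMod n, (j = i + 1 ∨ i = j + 1) → (S i j = 1 ∨ S i j = -1))
    (hz : ∀ i j : ZMod n, ¬ (j = i + 1 ∨ i = j + 1) → S i j = 0) :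
    skewEnergy S = 2 * Real.cot (Real.pi / (2 * n)) := by
  set A := S.map Complex.ofReal
  have hA (i j : ZMod n) (hij : ¬ (j = i + 1 ∨ i = j + 1)) : A i j = 0 := by simp [A, hz i j hij]
  have hAskew : Aᵀ = -A := by
    rw [← transpose_map, hskew]
    exact Matrix.map_neg _ Complex.ofReal_neg S
  have hAsq (i : ZMod n) : A i (i + 1) ^ 2 = 1 := by
    rcases hcyc i (i + 1) (.inl rfl) with h | h <;> simp [A, h]
  have hω := Complex.isPrimitiveRoot_exp n (NeZero.ne n)
  rw [skewEnergy, roots_charpoly_of_cycle hn hodd hA hAskew hAsq hω, Multiset.map_map]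
  simp only [Function.comp_def]
  rw [sum_map_norm_sub_inv_nthRoots hodd (sq_prod_cycle_eq_one hAsq) hω,
    Finset.sum_congr rfl fun k hk =>
      Complex.norm_exp_two_pi_mul_I_div_pow_sub_one (Finset.mem_range.mp hk).le,
    ← Finset.mul_sum, sum_range_sin_pi_mul_div n (NeZero.ne n)]
end

section
/- The skew energy of the uniformly oriented even cycle C_n^- (all arcs in the same cyclic direction) with n even equals 4·cot(π/n), while the skew energy of C_n^+ (all arcs in one direction except one) with n even equals 4·csc(π/n). -/
/-!
Both matrices are `P - Pᵀ` for a twisted cyclic shift `P` on `ZMod n` whose wrap-around entry is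
`c = 1` (for `C_n⁻`) or `c = -1` (for `C_n⁺`). Since `c² = 1`, `Pᵀ = P⁻¹`, and for every `ω` with
`ωⁿ = c` the vector `(ω ^ j)_j` is an eigenvector of `P` for `ω` and of `Pᵀ` for `ω⁻¹`. The `n`
solutions `ω_k = exp (i (x + 2πk/n))` (with `x = 0`, resp. `x = π/n`) give a Vandermonde eigenbasis,
so the eigenvalues are `ω_k - ω_k⁻¹ = 2i sin (x + 2πk/n)`. For `n = 2m` the sines in the second half
of the range are the negatives of those in the first half, which are nonnegative, and
`2 sin h · ∑_{k<m} sin (x + 2kh)` telescopes by the product-to-sum formula.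
-/

open Matrix Polynomial

open Finset
open scoped Real

theorem Matrix.charpoly_eq_prod_of_mul_eq_mul_diagonal {R ι : Type*} [CommRing R] [Fintype ι]
    [DecidableEq ι] {A U : Matrix ι ι R} {d : ι → R} (hU : IsUnit U.det)
    (h : A * U = U * diagonal d) : A.charpoly = ∏ i, (X - C (d i)) := by
  lift U to (Matrix ι ι R)ˣ using (isUnit_iff_isUnit_det U).2 hU
  rw [← charpoly_diagonal, ← charpoly_units_conj U (diagonal d), ← h]
  simp [mul_assoc]

theorem Matrix.det_pow_val_ne_zero {K : Type*} [Field K] {n : ℕ} [NeZero n] {ω : ZMod n → K}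
    (hω : Function.Injective ω) : (of fun j k : ZMod n => ω k ^ j.val).det ≠ 0 := by
  obtain ⟨m, rfl⟩ := Nat.exists_eq_succ_of_ne_zero (NeZero.ne n)
  rw [← det_transpose]
  exact det_vandermonde_ne_zero_iff.2 hω

theorem skewEnergy_eq_sum_norm_of_charpoly_eq_prod {V : Type*} [Fintype V] [DecidableEq V]
    {S : Matrix V V ℝ} {d : V → ℂ} (h : (S.map Complex.ofReal).charpoly = ∏ i, (X - C (d i))) :
    skewEnergy S = ∑ i, ‖d i‖ := by
  rw [skewEnergy, h, prod_eq_multiset_prod,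
    show (fun i => X - C (d i)) = (fun a => X - C a) ∘ d from rfl, ← Multiset.map_map,
    roots_multiset_prod_X_sub_C, Multiset.map_map]
  rfl

namespace ZMod

variable {n : ℕ} [NeZero n]

theorem val_add_one_of_ne_neg_one {i : ZMod n} (hi : i ≠ -1) : (i + 1).val = i.val + 1 := by
  have hlt : i.val + 1 < n := by
    refine lt_of_le_of_ne i.val_lt fun h => hi ?_
    rw [eq_neg_iff_add_eq_zero, ← natCast_zmod_val i, ← Nat.cast_add_one, h, natCast_self]
  rw [← natCast_zmod_val i, ← Nat.cast_add_one, val_cast_of_lt hlt, val_natCast_of_lt i.val_lt]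

theorem val_neg_one_add_one : (-1 : ZMod n).val + 1 = n := by
  obtain ⟨m, rfl⟩ := Nat.exists_eq_succ_of_ne_zero (NeZero.ne n)
  rw [val_neg_one]

theorem sum_val_eq_sum_range {M : Type*} [AddCommMonoid M] (f : ℕ → M) :
    ∑ k : ZMod n, f k.val = ∑ a ∈ range n, f a :=
  sum_nbij' val (fun a => (a : ZMod n)) (fun k _ => mem_range.2 k.val_lt)
    (fun _ _ => mem_univ _) (fun k _ => natCast_zmod_val k)
    (fun _ ha => val_cast_of_lt (mem_range.1 ha)) (fun _ _ => rfl)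

end ZMod

/-- `twistedShift n c - (twistedShift n c)ᵀ` is the skew-adjacency matrix of the directed `n`-cycle
`0 → 1 → ⋯ → n - 1 → 0` for `c = 1`, and of the same cycle with the arc `n - 1 → 0` reversed for
`c = -1`. -/
def twistedShift {R : Type*} [Zero R] [One R] (n : ℕ) (c : R) : Matrix (ZMod n) (ZMod n) R :=
  of fun i j => if j = i + 1 then if i = -1 then c else 1 else 0

section TwistedShift

variable {K : Type*} [Field K] {n : ℕ} [NeZero n]

theorem twistedShift_mulVec_pow_val {c ω : K} (hω : ω ^ n = c) :
    twistedShift n c *ᵥ (fun j : ZMod n => ω ^ j.val) = ω • fun j => ω ^ j.val := by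
  ext i
  simp only [mulVec, dotProduct, twistedShift, of_apply, ite_mul, zero_mul, sum_ite_eq',
    mem_univ, if_true, Pi.smul_apply, smul_eq_mul]
  split_ifs with hi
  · rw [hi, neg_add_cancel, ZMod.val_zero, pow_zero, mul_one, ← pow_succ',
      ZMod.val_neg_one_add_one, hω]
  · rw [ZMod.val_add_one_of_ne_neg_one hi, one_mul, pow_succ']

theorem twistedShift_transpose_mulVec_pow_val {c ω : K} (hc : c * c = 1) (hω : ω ^ n = c) :
    (twistedShift n c)ᵀ *ᵥ (fun j : ZMod n => ω ^ j.val) = ω⁻¹ • fun j => ω ^ j.val := by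
  have hω0 : ω ≠ 0 := (pow_ne_zero_iff (NeZero.ne n)).1 (hω ▸ left_ne_zero_of_mul_eq_one hc)
  ext i
  simp only [mulVec, dotProduct, twistedShift, transpose_apply, of_apply, ite_mul, zero_mul,
    Pi.smul_apply, smul_eq_mul]
  rw [sum_eq_single (i - 1) (fun j _ hj => if_neg fun h => hj (by rw [h]; ring)) (by simp),
    if_pos (sub_add_cancel i 1).symm]
  split_ifs with hi
  · rw [hi, sub_eq_neg_self.1 hi, ZMod.val_zero, pow_zero, mul_one]
    refine eq_inv_of_mul_eq_one_left ?_
    rw [mul_assoc, ← pow_succ, ZMod.val_neg_one_add_one, hω, hc]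
  · conv_rhs => rw [← sub_add_cancel i 1, ZMod.val_add_one_of_ne_neg_one hi, pow_succ']
    rw [one_mul, inv_mul_cancel_left₀ hω0]

theorem twistedShift_sub_transpose_mul_eq_mul_diagonal {c : K} (hc : c * c = 1)
    {ω : ZMod n → K} (hω : ∀ k, ω k ^ n = c) :
    (twistedShift n c - (twistedShift n c)ᵀ) * of (fun j k => ω k ^ j.val) =
      of (fun j k => ω k ^ j.val) * diagonal fun k => ω k - (ω k)⁻¹ := by
  ext i k
  have hP := congrFun (twistedShift_mulVec_pow_val (hω k)) i
  have hPt := congrFun (twistedShift_transpose_mulVec_pow_val hc (hω k)) i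
  simp only [mulVec, dotProduct, Pi.smul_apply, smul_eq_mul] at hP hPt
  rw [Matrix.sub_mul, Matrix.sub_apply, mul_diagonal]
  simp only [mul_apply, of_apply, hP, hPt]
  ring

theorem charpoly_twistedShift_sub_transpose {c α ζ : K} (hc : c * c = 1) (hα : α ^ n = c)
    (hζ : IsPrimitiveRoot ζ n) :
    (twistedShift n c - (twistedShift n c)ᵀ).charpoly =
      ∏ k : ZMod n, (X - C (α * ζ ^ k.val - (α * ζ ^ k.val)⁻¹)) := by
  have hα0 : α ≠ 0 := (pow_ne_zero_iff (NeZero.ne n)).1 (hα ▸ left_ne_zero_of_mul_eq_one hc)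
  have hω : ∀ k : ZMod n, (α * ζ ^ k.val) ^ n = c := fun k => by
    rw [mul_pow, ← pow_mul, mul_comm k.val, pow_mul, hζ.pow_eq_one, one_pow, mul_one, hα]
  have hinj : Function.Injective fun k : ZMod n => α * ζ ^ k.val := fun k l h =>
    ZMod.val_injective n (hζ.pow_inj k.val_lt l.val_lt (mul_left_cancel₀ hα0 h))
  exact charpoly_eq_prod_of_mul_eq_mul_diagonal (det_pow_val_ne_zero hinj).isUnit
    (twistedShift_sub_transpose_mul_eq_mul_diagonal hc hω)

end TwistedShift

namespace Complex

theorem norm_exp_mul_I_sub_inv (θ : ℝ) :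
    ‖exp (θ * I) - (exp (θ * I))⁻¹‖ = 2 * |Real.sin θ| := by
  have h : exp (θ * I) - (exp (θ * I))⁻¹ = 2 * Real.sin θ * I := by
    rw [← exp_neg, ← neg_mul, exp_mul_I, exp_mul_I, cos_neg, sin_neg, ofReal_sin]
    ring
  rw [h, norm_mul, norm_mul, norm_I, mul_one, Complex.norm_two, norm_real, Real.norm_eq_abs]

theorem exp_mul_I_mul_exp_two_pi_div_pow (x : ℝ) (n k : ℕ) :
    exp (x * I) * exp (2 * π * I / n) ^ k = exp ((x + 2 * k * (π / n) : ℝ) * I) := by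
  rw [← exp_nat_mul, ← exp_add]
  push_cast
  ring_nf

end Complex

theorem skewEnergy_eq_two_mul_sum_abs_sin {n : ℕ} [NeZero n] {S : Matrix (ZMod n) (ZMod n) ℝ}
    {c : ℂ} {x : ℝ} (hc : c * c = 1) (hx : Complex.exp (x * Complex.I) ^ n = c)
    (hS : S.map Complex.ofReal = twistedShift n c - (twistedShift n c)ᵀ) :
    skewEnergy S = 2 * ∑ k ∈ range n, |Real.sin (x + 2 * k * (π / n))| := by
  have hchar := charpoly_twistedShift_sub_transpose hc hx
    (Complex.isPrimitiveRoot_exp n (NeZero.ne n))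
  rw [← hS] at hchar
  rw [skewEnergy_eq_sum_norm_of_charpoly_eq_prod hchar, mul_sum,
    ← ZMod.sum_val_eq_sum_range (fun k => 2 * |Real.sin (x + 2 * k * (π / n))|)]
  simp only [Complex.exp_mul_I_mul_exp_two_pi_div_pow, Complex.norm_exp_mul_I_sub_inv]

section Trigonometric

open Real

theorem two_mul_sin_mul_sum_range_sin_add (x h : ℝ) (m : ℕ) :
    2 * sin h * ∑ k ∈ range m, sin (x + 2 * k * h) = cos (x - h) - cos (x + (2 * m - 1) * h) := by
  induction m with
  | zero => simp [sub_eq_add_neg]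
  | succ m ih =>
    have hcos : cos (h - (x + 2 * m * h)) = cos (x + (2 * m - 1) * h) := by
      rw [← cos_neg]; ring_nf
    rw [sum_range_succ, mul_add, ih, two_mul_sin_mul_sin, hcos]
    push_cast
    ring_nf

theorem sum_range_abs_sin_add_of_even {n : ℕ} (hn : Even n) (hn0 : n ≠ 0) {x : ℝ} (hx0 : 0 ≤ x)
    (hx : x ≤ 2 * (π / n)) :
    ∑ k ∈ range n, |sin (x + 2 * k * (π / n))| = 2 * cos (x - π / n) / sin (π / n) := by
  obtain ⟨m, rfl⟩ := hn
  set h := π / ↑(m + m) with hh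
  have hm : (1 : ℝ) ≤ m := by norm_cast; omega
  have hpos : 0 < h := by positivity
  have hmh : 2 * m * h = π := by rw [hh]; push_cast; field_simp; ring
  have hsin : 0 < sin h := sin_pos_of_pos_of_lt_pi hpos (by nlinarith)
  have hsecond : ∀ k : ℕ, |sin (x + 2 * ↑(m + k) * h)| = |sin (x + 2 * k * h)| := fun k => by
    rw [show x + 2 * ↑(m + k) * h = x + 2 * k * h + π by push_cast; linarith, sin_add_pi, abs_neg]
  have hfirst : ∀ k ∈ range m, |sin (x + 2 * k * h)| = sin (x + 2 * k * h) := fun k hk => by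
    have hk : (k : ℝ) + 1 ≤ m := by exact_mod_cast mem_range.1 hk
    refine abs_of_nonneg (sin_nonneg_of_nonneg_of_le_pi (by positivity) ?_)
    nlinarith
  have htel := two_mul_sin_mul_sum_range_sin_add x h m
  rw [show x + (2 * m - 1) * h = x - h + π by linarith, cos_add_pi] at htel
  rw [sum_range_add, funext hsecond, sum_congr rfl hfirst, ← two_mul, eq_div_iff hsin.ne']
  linarith

end Trigonometric

/-- For even `n`, the skew energy of the uniformly oriented cycle `C_n⁻` (all arcs in the
same cyclic direction) equals `4 cot(π/n)`, while the skew energy of `C_n⁺` (all arcs in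
one direction except one reversed arc) equals `4 csc(π/n)`. -/
theorem skewEnergy_even_cycle {n : ℕ} [NeZero n] (hn : 3 ≤ n) (heven : Even n)
    (Sm Sp : Matrix (ZMod n) (ZMod n) ℝ)
    (hm : ∀ i j : ZMod n, Sm i j = if j = i + 1 then 1 else if i = j + 1 then -1 else 0)
    (hp : ∀ i j : ZMod n, Sp i j =
      if (i = -1 ∧ j = 0) ∨ (i = 0 ∧ j = -1) then -Sm i j else Sm i j) :
    skewEnergy Sm = 4 * Real.cot (Real.pi / n) ∧
    skewEnergy Sp = 4 / Real.sin (Real.pi / n) := by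
  have h2 : (2 : ZMod n) ≠ 0 := fun h => by
    have := Nat.le_of_dvd two_pos ((ZMod.natCast_eq_zero_iff 2 n).1 (by exact_mod_cast h))
    omega
  have hSm : Sm.map Complex.ofReal = twistedShift n 1 - (twistedShift n 1)ᵀ := by
    ext i j
    simp only [map_apply, hm, Matrix.sub_apply, transpose_apply, twistedShift, of_apply]
    split_ifs <;> push_cast <;> grind
  have hSp : Sp.map Complex.ofReal = twistedShift n (-1) - (twistedShift n (-1))ᵀ := by
    ext i j
    simp only [map_apply, hp, hm, Matrix.sub_apply, transpose_apply, twistedShift, of_apply]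
    split_ifs <;> push_cast <;> grind
  constructor
  · rw [skewEnergy_eq_two_mul_sum_abs_sin (x := 0) (by norm_num) (by simp) hSm,
      sum_range_abs_sin_add_of_even heven (NeZero.ne n) le_rfl (by positivity),
      Real.cot_eq_cos_div_sin, zero_sub, Real.cos_neg]
    ring
  · have hx : Complex.exp ((π / n : ℝ) * Complex.I) ^ n = -1 := by
      rw [← Complex.exp_nat_mul, ← Complex.exp_pi_mul_I]
      have hn0 : (n : ℂ) ≠ 0 := NeZero.ne _
      congr 1
      push_cast
      field_simp
    rw [skewEnergy_eq_two_mul_sum_abs_sin (by norm_num) hx hSp,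
      sum_range_abs_sin_add_of_even heven (NeZero.ne n) (by positivity)
        (by linarith [show 0 < π / n by positivity]), sub_self, Real.cos_zero]
    ring
end

section
/- If the skew energy of an oriented graph is a rational number, then it is an even positive integer. -/
/-!
Over `ℂ` the integer skew-symmetric matrix `S` is skew-Hermitian, so its eigenvalues lie on the
imaginary axis; they are algebraic integers (roots of the monic integer polynomial `charpoly S`)
and sum to `trace S = 0`. Hence half the skew energy is `-i` times the sum of the eigenvalues in
the upper half-plane, an algebraic integer. Being rational, it is an integer `m`, and `m > 0`
because a nonzero skew-Hermitian matrix has a nonzero eigenvalue.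
-/

open Matrix Polynomial

namespace Matrix

variable {n : Type*}

theorem isHermitian_I_smul {M : Matrix n n ℂ} (hM : Mᴴ = -M) :
    (Complex.I • M).IsHermitian := by
  rw [IsHermitian, conjTranspose_smul, hM, Complex.star_def, Complex.conj_I, smul_neg, neg_smul,
    neg_neg]

variable [Fintype n]

theorem trace_eq_zero_of_transpose_eq_neg {R : Type*} [AddCommGroup R] [IsAddTorsionFree R]
    {A : Matrix n n R} (h : Aᵀ = -A) : A.trace = 0 :=
  self_eq_neg.mp (by rw [← trace_neg, ← h, trace_transpose])

variable [DecidableEq n]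

theorem isIntegral_of_isRoot_charpoly_map {R K : Type*} [CommRing R] [CommRing K] [Algebra R K]
    (S : Matrix n n R) {z : K} (hz : (S.map (algebraMap R K)).charpoly.IsRoot z) :
    IsIntegral R z :=
  ⟨S.charpoly, S.charpoly_monic, by rwa [eval₂_eq_eval_map, ← charpoly_map]⟩

section SkewHermitian

variable {M : Matrix n n ℂ}

theorem I_mul_mem_spectrum_I_smul_iff {z : ℂ} :
    Complex.I * z ∈ spectrum ℂ (Complex.I • M) ↔ z ∈ spectrum ℂ M :=
  spectrum.smul_mem_smul_iff (r := Units.mk0 Complex.I Complex.I_ne_zero)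

theorem re_eq_zero_of_mem_spectrum (hM : Mᴴ = -M) {z : ℂ} (hz : z ∈ spectrum ℂ M) :
    z.re = 0 := by
  rw [← I_mul_mem_spectrum_I_smul_iff, (isHermitian_I_smul hM).spectrum_eq_image_range] at hz
  obtain ⟨t, -, ht⟩ := hz
  simpa using congrArg Complex.im ht.symm

theorem exists_mem_spectrum_ne_zero (hM : Mᴴ = -M) (h0 : M ≠ 0) :
    ∃ z ∈ spectrum ℂ M, z ≠ 0 := by
  have hH := isHermitian_I_smul hM
  obtain ⟨i, hi⟩ := Function.ne_iff.mp <|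
    hH.eigenvalues_eq_zero_iff.not.mpr (smul_ne_zero Complex.I_ne_zero h0)
  refine ⟨-Complex.I * hH.eigenvalues i, ?_, by simpa using hi⟩
  rw [← I_mul_mem_spectrum_I_smul_iff, hH.spectrum_eq_image_range]
  exact ⟨_, ⟨i, rfl⟩, by simp [← mul_assoc]⟩

end SkewHermitian

end Matrix

namespace Complex

theorem ofReal_norm_of_re_eq_zero_of_im_nonneg {z : ℂ} (hre : z.re = 0) (him : 0 ≤ z.im) :
    (‖z‖ : ℂ) = -(I * z) := by
  rw [← abs_im_eq_norm.mpr hre, abs_of_nonneg him]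
  apply ext <;> simp [hre]

theorem ofReal_norm_of_re_eq_zero_of_im_nonpos {z : ℂ} (hre : z.re = 0) (him : z.im ≤ 0) :
    (‖z‖ : ℂ) = I * z := by
  rw [← abs_im_eq_norm.mpr hre, abs_of_nonpos him]
  apply ext <;> simp [hre]

/-- Since the points sum to zero, the lower half-plane contributes as much as the upper one. -/
theorem ofReal_sum_norm_eq_neg_two_I_mul {R : Multiset ℂ} (hre : ∀ z ∈ R, z.re = 0)
    (hsum : R.sum = 0) :
    (((R.map (‖·‖)).sum : ℝ) : ℂ) = -(2 * I * (R.filter (0 ≤ ·.im)).sum) := by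
  have hsplit := Multiset.filter_add_not (0 ≤ ·.im) R
  have hhalves : (R.filter (0 ≤ ·.im)).sum + (R.filter (¬0 ≤ ·.im)).sum = 0 := by
    rw [← Multiset.sum_add, hsplit, hsum]
  have hcast : (((R.map (‖·‖)).sum : ℝ) : ℂ) = (R.map fun z => (‖z‖ : ℂ)).sum := by
    rw [← ofRealHom_eq_coe, map_multiset_sum, Multiset.map_map]
    rfl
  rw [hcast, ← hsplit, Multiset.map_add, Multiset.sum_add,
    Multiset.map_congr rfl fun z hz => ofReal_norm_of_re_eq_zero_of_im_nonneg
      (hre z (Multiset.mem_of_mem_filter hz)) (Multiset.mem_filter.mp hz).2,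
    Multiset.map_congr rfl fun z hz => ofReal_norm_of_re_eq_zero_of_im_nonpos
      (hre z (Multiset.mem_of_mem_filter hz)) (not_le.mp (Multiset.mem_filter.mp hz).2).le,
    Multiset.sum_map_neg, Multiset.sum_map_mul_left, Multiset.sum_map_mul_left, hsplit]
  simp only [Multiset.map_id']
  linear_combination I * hhalves

theorem exists_int_sum_norm_eq_two_mul {R : Multiset ℂ} (hre : ∀ z ∈ R, z.re = 0)
    (hsum : R.sum = 0) (hint : ∀ z ∈ R, IsIntegral ℤ z) {q : ℚ}
    (hq : (R.map (‖·‖)).sum = q) :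
    ∃ m : ℤ, (R.map (‖·‖)).sum = 2 * m := by
  set A := (R.filter (0 ≤ ·.im)).sum
  have hA : IsIntegral ℤ (-(I * A)) :=
    (isIntegral_int_I.mul (IsIntegral.multiset_sum fun z hz =>
      hint z (Multiset.mem_of_mem_filter hz))).neg
  have hhalf : algebraMap ℚ ℂ (q / 2) = -(I * A) := by
    have h := ofReal_sum_norm_eq_neg_two_I_mul hre hsum
    rw [hq] at h
    push_cast at h
    rw [map_div₀, map_ofNat, eq_ratCast]
    linear_combination h / 2
  obtain ⟨m, hm⟩ := IsIntegrallyClosed.isIntegral_iff.mp <|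
    (isIntegral_algebraMap_iff (algebraMap ℚ ℂ).injective).mp (hhalf ▸ hA)
  have hq2 : q = 2 * m := by
    rw [← eq_intCast (algebraMap ℤ ℚ), hm]
    ring
  exact ⟨m, by rw [hq, hq2]; push_cast; ring⟩

end Complex

theorem Multiset.sum_map_norm_pos {E : Type*} [NormedAddCommGroup E] {s : Multiset E} {x : E}
    (hx : x ∈ s) (hx0 : x ≠ 0) : 0 < (s.map (‖·‖)).sum :=
  (norm_pos_iff.mpr hx0).trans_le <|
    single_le_sum (forall_mem_map_iff.mpr fun y _ => norm_nonneg y) _ (mem_map_of_mem _ hx)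

theorem skewEnergy_rational_even_general {n : ℕ}
    (S : Matrix (Fin n) (Fin n) ℤ) (hskew : Sᵀ = -S)
    (hne : S ≠ 0)
    (q : ℚ) (hq : skewEnergy (S.map (Int.cast : ℤ → ℝ)) = (q : ℝ)) :
    ∃ p : ℕ, 0 < p ∧ skewEnergy (S.map (Int.cast : ℤ → ℝ)) = 2 * (p : ℝ) := by
  set M : Matrix (Fin n) (Fin n) ℂ := S.map (algebraMap ℤ ℂ)
  have hE :
      skewEnergy (S.map (Int.cast : ℤ → ℝ)) = (M.charpoly.roots.map (‖·‖)).sum := by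
    rw [skewEnergy, Matrix.map_map]
    rfl
  have hMt : Mᵀ = -M := by rw [← transpose_map, hskew, Matrix.map_neg _ (map_neg _)]
  have hM : Mᴴ = -M := by
    rw [← conjTranspose_map _ (fun _ => by simp), conjTranspose_eq_transpose_of_trivial,
      transpose_map, hMt]
  have hroots : ∀ z, z ∈ M.charpoly.roots ↔ z ∈ spectrum ℂ M := fun z => by
    rw [mem_roots M.charpoly_monic.ne_zero, mem_spectrum_iff_isRoot_charpoly]
  obtain ⟨m, hm⟩ := Complex.exists_int_sum_norm_eq_two_mul
    (fun z hz => re_eq_zero_of_mem_spectrum hM ((hroots z).mp hz))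
    (by rw [← trace_eq_sum_roots_charpoly, trace_eq_zero_of_transpose_eq_neg hMt])
    (fun z hz => S.isIntegral_of_isRoot_charpoly_map (isRoot_of_mem_roots hz)) (hE ▸ hq)
  have hM0 : M ≠ 0 := fun h0 => hne <|
    map_injective (algebraMap ℤ ℂ).injective_int (h0.trans (Matrix.map_zero _ (map_zero _)).symm)
  obtain ⟨z, hz, hz0⟩ := exists_mem_spectrum_ne_zero hM hM0
  have hpos := Multiset.sum_map_norm_pos ((hroots z).mpr hz) hz0
  rw [hm] at hpos
  have hm0 : 0 < m := by exact_mod_cast pos_of_mul_pos_right hpos zero_le_two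
  refine ⟨m.toNat, by omega, ?_⟩
  rw [hE, hm, ← Int.toNat_of_nonneg hm0.le]
  norm_cast

/-- If the skew energy of an oriented graph (with at least one arc) is a rational
number, then it is an even positive integer. -/
theorem skewEnergy_rational_even {n : ℕ}
    (S : Matrix (Fin n) (Fin n) ℤ) (hskew : Sᵀ = -S)
    (hentries : ∀ i j, S i j = 0 ∨ S i j = 1 ∨ S i j = -1) (hne : S ≠ 0)
    (q : ℚ) (hq : skewEnergy (S.map (Int.cast : ℤ → ℝ)) = (q : ℝ)) :
    ∃ p : ℕ, 0 < p ∧ skewEnergy (S.map (Int.cast : ℤ → ℝ)) = 2 * (p : ℝ) :=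
  skewEnergy_rational_even_general S hskew hne q hq
end

section
/- If H^τ and G^σ are oriented graphs whose skew-spectra equal i times the adjacency spectra of their underlying graphs (Sp(H^τ) = i·Sp(H), Sp(G^σ) = i·Sp(G)), then the naturally oriented Cartesian product satisfies Sp(H^τ □ G^σ) = i·Sp(H □ G). -/
open Matrix Polynomial
open scoped Kronecker

section CartHelpers

variable {k : Type*} [Fintype k] [DecidableEq k]

lemma my_charpoly_conj (U V M : Matrix k k ℂ) (hUV : U * V = 1) (hVU : V * U = 1) :
    (U * M * V).charpoly = M.charpoly := by
  have hc : charmatrix (U * M * V) =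
      U.map C * charmatrix M * V.map C := by
    have hsc : (Matrix.scalar k (X : ℂ[X])) = (X : ℂ[X]) • (1 : Matrix k k ℂ[X]) := by
      ext i j; simp [Matrix.scalar_apply, Matrix.smul_apply, Matrix.one_apply,
        Matrix.diagonal_apply]
    simp only [charmatrix, RingHom.mapMatrix_apply, hsc, mul_sub, sub_mul,
      Matrix.mul_smul, Matrix.smul_mul, mul_one]
    rw [← Matrix.map_mul, hUV, ← Matrix.map_mul, ← Matrix.map_mul]
    simp
  rw [Matrix.charpoly, Matrix.charpoly, hc, det_mul, det_mul]
  have h1 : (U.map C).det * (V.map C).det = 1 := by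
    rw [← det_mul, ← Matrix.map_mul, hUV]; simp
  ring_nf
  ring_nf at h1
  rw [mul_comm, ← mul_assoc, mul_comm ((V.map C).det), h1, one_mul]

lemma my_charpoly_diagonal (d : k → ℂ) :
    (diagonal d).charpoly = ∏ i, (X - C (d i)) := by
  have : charmatrix (diagonal d) = diagonal (fun i => X - C (d i)) := by
    ext i j
    by_cases h : i = j
    · subst h; simp [charmatrix_apply_eq]
    · simp [charmatrix_apply_ne _ _ _ h, diagonal_apply_ne _ h]
  rw [Matrix.charpoly, this, det_diagonal]

lemma my_roots_charpoly_diag (M U V : Matrix k k ℂ) (d : k → ℂ)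
    (hUV : U * V = 1) (hVU : V * U = 1) (h : M = U * diagonal d * V) :
    M.charpoly.roots = Finset.univ.val.map d := by
  rw [h, my_charpoly_conj U V _ hUV hVU, my_charpoly_diagonal]
  have : ∏ i, (X - C (d i)) = ((Finset.univ.val.map d).map fun a => X - C a).prod := by
    rw [Multiset.map_map]; rfl
  rw [this, roots_multiset_prod_X_sub_C]

lemma exists_diag_hermitian (M : Matrix k k ℂ) (hM : M.IsHermitian) :
    ∃ U V : Matrix k k ℂ, ∃ d : k → ℂ, U * V = 1 ∧ V * U = 1 ∧ M = U * diagonal d * V := by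
  refine ⟨(hM.eigenvectorUnitary : Matrix k k ℂ), star (hM.eigenvectorUnitary : Matrix k k ℂ),
    RCLike.ofReal ∘ hM.eigenvalues, ?_, ?_, hM.spectral_theorem⟩
  · exact mem_unitaryGroup_iff.mp (hM.eigenvectorUnitary).2
  · exact mem_unitaryGroup_iff'.mp (hM.eigenvectorUnitary).2

lemma exists_diag_skew (M : Matrix k k ℂ) (hM : Mᴴ = -M) :
    ∃ U V : Matrix k k ℂ, ∃ d : k → ℂ, U * V = 1 ∧ V * U = 1 ∧ M = U * diagonal d * V := by
  have hherm : (Complex.I • M).IsHermitian := by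
    unfold Matrix.IsHermitian
    rw [conjTranspose_smul, hM]
    simp [smul_smul, Complex.conj_I]
  obtain ⟨U, V, d, hUV, hVU, hd⟩ := exists_diag_hermitian _ hherm
  refine ⟨U, V, fun i => -Complex.I * d i, hUV, hVU, ?_⟩
  have : M = (-Complex.I) • (Complex.I • M) := by
    rw [smul_smul]; simp
  rw [this, hd, ← smul_mul_assoc, ← mul_smul_comm, ← Matrix.diagonal_smul]
  rfl

lemma kron_sum_roots {l : Type*} [Fintype l] [DecidableEq l]
    (A : Matrix k k ℂ) (B : Matrix l l ℂ)
    (U1 V1 : Matrix k k ℂ) (U2 V2 : Matrix l l ℂ) (d1 : k → ℂ) (d2 : l → ℂ)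
    (h1 : U1 * V1 = 1) (h1' : V1 * U1 = 1) (hA : A = U1 * diagonal d1 * V1)
    (h2 : U2 * V2 = 1) (h2' : V2 * U2 = 1) (hB : B = U2 * diagonal d2 * V2) :
    (A ⊗ₖ (1 : Matrix l l ℂ) + (1 : Matrix k k ℂ) ⊗ₖ B).charpoly.roots =
      Finset.univ.val.map (fun p : k × l => d1 p.1 + d2 p.2) := by
  apply my_roots_charpoly_diag _ (U1 ⊗ₖ U2) (V1 ⊗ₖ V2)
  · rw [← Matrix.mul_kronecker_mul, h1, h2, Matrix.one_kronecker_one]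
  · rw [← Matrix.mul_kronecker_mul, h1', h2', Matrix.one_kronecker_one]
  · have e1 : A ⊗ₖ (1 : Matrix l l ℂ) =
        (U1 ⊗ₖ U2) * (diagonal d1 ⊗ₖ (1 : Matrix l l ℂ)) * (V1 ⊗ₖ V2) := by
      rw [← Matrix.mul_kronecker_mul, ← Matrix.mul_kronecker_mul, ← hA, Matrix.mul_one, h2]
    have e2 : (1 : Matrix k k ℂ) ⊗ₖ B =
        (U1 ⊗ₖ U2) * ((1 : Matrix k k ℂ) ⊗ₖ diagonal d2) * (V1 ⊗ₖ V2) := by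
      rw [← Matrix.mul_kronecker_mul, ← Matrix.mul_kronecker_mul, ← hB, Matrix.mul_one, h1]
    rw [e1, e2, ← Matrix.add_mul, ← Matrix.mul_add]
    congr 2
    rw [← Matrix.diagonal_one, ← Matrix.diagonal_one,
      Matrix.diagonal_kronecker_diagonal, Matrix.diagonal_kronecker_diagonal,
      Matrix.diagonal_add]
    simp

lemma pair_map_eq_bind {α β : Type*} [Fintype α] [Fintype β] (f : α → ℂ) (g : β → ℂ) :
    (Finset.univ : Finset (α × β)).val.map (fun p => f p.1 + g p.2) =
      (Finset.univ.val.map f).bind (fun a => (Finset.univ.val.map g).map (fun b => a + b)) := by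
  have huniv : (Finset.univ : Finset (α × β)).val =
      (Finset.univ.val).bind (fun a : α => Multiset.map (Prod.mk a) Finset.univ.val) := by
    rw [← Finset.univ_product_univ]; rfl
  rw [huniv, Multiset.map_bind, Multiset.bind_map]
  congr 1
  funext a
  rw [Multiset.map_map, Multiset.map_map]
  rfl

lemma map_kron_sum {l : Type*} [Fintype l] [DecidableEq l]
    (A : Matrix k k ℝ) (B : Matrix l l ℝ) :
    ((A ⊗ₖ (1 : Matrix l l ℝ) + (1 : Matrix k k ℝ) ⊗ₖ B).map Complex.ofReal) =
      (A.map Complex.ofReal) ⊗ₖ (1 : Matrix l l ℂ) +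
        (1 : Matrix k k ℂ) ⊗ₖ (B.map Complex.ofReal) := by
  ext ⟨i, j⟩ ⟨i', j'⟩
  simp [Matrix.map_apply, Matrix.kroneckerMap_apply, Matrix.one_apply, Matrix.add_apply,
    apply_ite Complex.ofReal, mul_ite, ite_mul]

lemma map_isHermitian {M : Matrix k k ℝ} (h : Mᵀ = M) :
    (M.map Complex.ofReal).IsHermitian := by
  unfold Matrix.IsHermitian
  ext i j
  have := congrFun (congrFun h i) j
  simp only [conjTranspose_apply, Matrix.map_apply, Complex.star_def, Complex.conj_ofReal]
  exact_mod_cast this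

lemma map_skew {M : Matrix k k ℝ} (h : Mᵀ = -M) :
    (M.map Complex.ofReal)ᴴ = -(M.map Complex.ofReal) := by
  ext i j
  have := congrFun (congrFun h i) j
  simp only [conjTranspose_apply, Matrix.map_apply, Complex.star_def, Complex.conj_ofReal,
    Matrix.neg_apply]
  rw [Matrix.transpose_apply] at this
  rw [this]
  simp
end CartHelpers

/-- If `H^τ` and `G^σ` are oriented graphs whose skew-spectra equal `i` times the
adjacency spectra of their underlying graphs, then the naturally oriented Cartesian
product satisfies `Sp(H^τ □ G^σ) = i·Sp(H □ G)`.  At the matrix level,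
`S(H^τ □ G^σ) = S(H^τ) ⊗ I + I ⊗ S(G^σ)` and `A(H □ G) = A(H) ⊗ I + I ⊗ A(G)`, and
spectra are the multisets of roots of the complex characteristic polynomials. -/
theorem cartesianProduct_spectrum {m n : ℕ}
    (SH AH : Matrix (Fin m) (Fin m) ℝ) (SG AG : Matrix (Fin n) (Fin n) ℝ)
    (hSH : SHᵀ = -SH) (hSG : SGᵀ = -SG) (hAH : AHᵀ = AH) (hAG : AGᵀ = AG)
    (hH : (SH.map Complex.ofReal).charpoly.roots =
      ((AH.map Complex.ofReal).charpoly.roots).map (fun z => Complex.I * z))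
    (hG : (SG.map Complex.ofReal).charpoly.roots =
      ((AG.map Complex.ofReal).charpoly.roots).map (fun z => Complex.I * z)) :
    (((SH ⊗ₖ (1 : Matrix (Fin n) (Fin n) ℝ) +
        (1 : Matrix (Fin m) (Fin m) ℝ) ⊗ₖ SG)).map Complex.ofReal).charpoly.roots =
      (((AH ⊗ₖ (1 : Matrix (Fin n) (Fin n) ℝ) +
        (1 : Matrix (Fin m) (Fin m) ℝ) ⊗ₖ AG)).map Complex.ofReal).charpoly.roots.map
        (fun z => Complex.I * z) := by
  obtain ⟨U1, V1, d1, h1, h1', hd1⟩ := exists_diag_skew _ (map_skew hSH)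
  obtain ⟨U2, V2, d2, h2, h2', hd2⟩ := exists_diag_skew _ (map_skew hSG)
  obtain ⟨W1, X1, a1, g1, g1', ha1⟩ := exists_diag_hermitian _ (map_isHermitian hAH)
  obtain ⟨W2, X2, a2, g2, g2', ha2⟩ := exists_diag_hermitian _ (map_isHermitian hAG)
  rw [map_kron_sum, map_kron_sum,
    kron_sum_roots _ _ U1 V1 U2 V2 d1 d2 h1 h1' hd1 h2 h2' hd2,
    kron_sum_roots _ _ W1 X1 W2 X2 a1 a2 g1 g1' ha1 g2 g2' ha2,
    pair_map_eq_bind, pair_map_eq_bind]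
  rw [my_roots_charpoly_diag _ _ _ _ h1 h1' hd1, my_roots_charpoly_diag _ _ _ _ g1 g1' ha1] at hH
  rw [my_roots_charpoly_diag _ _ _ _ h2 h2' hd2, my_roots_charpoly_diag _ _ _ _ g2 g2' ha2] at hG
  rw [hH, hG, Multiset.map_bind, Multiset.bind_map]
  congr 1
  funext a
  simp only [Multiset.map_map]
  congr 1
  funext b
  simp [Function.comp, mul_add]
end

section
/- Skew energy of the oriented Kronecker product with a bipartite factor: if S_1 is an m×m skew-symmetric matrix with S_1^T S_1 = k I_m and S_2 is an n×n skew-symmetric matrix with S_2^T S_2 = ℓ I_n, and B is the matrix obtained from S_1 ⊗ S_2 by the bipartite sign modification making it skew-symmetric, then B^T B = kℓ I_{mn}; hence the oriented graph (H^τ ⊗ G^σ)^o has optimum skew energy mn√(kℓ). -/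
open Matrix Polynomial
open scoped Kronecker

/-!
Writing `K = M ⊗ S₂`, the matrix `B = [[0, K], [-Kᵀ, 0]]` satisfies `Bᵀ B = diag(K Kᵀ, Kᵀ K)`,
and likewise `S₁ᵀ S₁ = diag(M Mᵀ, Mᵀ M)`. The Kronecker product is multiplicative and commutes
with transposition, so `M Mᵀ = Mᵀ M = k I` and `S₂ S₂ᵀ = S₂ᵀ S₂ = ℓ I` (skewness of `S₂`) give
`K Kᵀ = Kᵀ K = kℓ I`. Finally, an eigenvector `v` of a skew-symmetric `B` with `Bᵀ B = c I` gives
`c v = Bᵀ B v = -μ² v`, so every eigenvalue has modulus `√c`.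
-/

namespace Matrix

section Blocks

variable {R m n : Type*} [Ring R]

theorem transpose_fromBlocks_zero_neg_transpose (K : Matrix m n R) :
    (fromBlocks 0 K (-Kᵀ) 0)ᵀ = -fromBlocks 0 K (-Kᵀ) 0 := by
  simp [fromBlocks_transpose, fromBlocks_neg]

variable [Fintype m] [Fintype n]

theorem transpose_fromBlocks_zero_neg_transpose_mul_self (K : Matrix m n R) :
    (fromBlocks 0 K (-Kᵀ) 0)ᵀ * fromBlocks 0 K (-Kᵀ) 0 =
      fromBlocks (K * Kᵀ) 0 0 (Kᵀ * K) := by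
  simp [fromBlocks_transpose, fromBlocks_multiply]

theorem transpose_fromBlocks_zero_neg_transpose_mul_self_eq_smul_one_iff [DecidableEq m]
    [DecidableEq n] (K : Matrix m n R) (c : R) :
    (fromBlocks 0 K (-Kᵀ) 0)ᵀ * fromBlocks 0 K (-Kᵀ) 0 = c • 1 ↔
      K * Kᵀ = c • 1 ∧ Kᵀ * K = c • 1 := by
  rw [transpose_fromBlocks_zero_neg_transpose_mul_self, ← fromBlocks_one, fromBlocks_smul,
    smul_zero, smul_zero, fromBlocks_inj]
  simp

end Blocks

theorem mul_transpose_self_eq_transpose_mul_self_of_transpose_eq_neg {R n : Type*} [Ring R]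
    [Fintype n] {S : Matrix n n R} (hS : Sᵀ = -S) : S * Sᵀ = Sᵀ * S := by
  rw [hS, mul_neg, neg_mul]

section Kronecker

variable {R l m n p : Type*} [CommSemiring R] [Fintype m] [Fintype p]
  [DecidableEq l] [DecidableEq n]

theorem kronecker_mul_transpose_kronecker {A : Matrix l m R} {B : Matrix n p R} {a b : R}
    (hA : A * Aᵀ = a • 1) (hB : B * Bᵀ = b • 1) :
    (A ⊗ₖ B) * (A ⊗ₖ B)ᵀ = (a * b) • 1 := by
  rw [← kroneckerMap_transpose, ← mul_kronecker_mul, hA, hB, smul_kronecker, kronecker_smul,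
    one_kronecker_one, smul_smul]

theorem transpose_kronecker_mul_kronecker {A : Matrix m l R} {B : Matrix p n R} {a b : R}
    (hA : Aᵀ * A = a • 1) (hB : Bᵀ * B = b • 1) :
    (A ⊗ₖ B)ᵀ * (A ⊗ₖ B) = (a * b) • 1 := by
  simpa [kroneckerMap_transpose] using
    kronecker_mul_transpose_kronecker (A := Aᵀ) (B := Bᵀ) (by simpa using hA)
      (by simpa using hB)

end Kronecker

theorem sq_eq_neg_of_isRoot_charpoly {K V : Type*} [Field K] [Fintype V] [DecidableEq V]
    {A : Matrix V V K} (hskew : Aᵀ = -A) {c : K} (hA : Aᵀ * A = c • 1) {μ : K}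
    (hμ : A.charpoly.IsRoot μ) : μ ^ 2 = -c := by
  obtain ⟨v, hv, hμv⟩ : ∃ v ≠ 0, (scalar V μ - A) *ᵥ v = 0 :=
    exists_mulVec_eq_zero_iff.2 (by rw [← eval_charpoly]; exact hμ)
  have hAv : A *ᵥ v = μ • v := by
    rw [sub_mulVec, sub_eq_zero] at hμv
    simpa using hμv.symm
  have hv_smul : (c + μ ^ 2) • v = 0 := by
    have h := congrArg (· *ᵥ v) hA
    simp only [hskew, neg_mul, neg_mulVec, ← mulVec_mulVec, hAv, mulVec_smul, smul_mulVec,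
      one_mulVec, smul_smul] at h
    rw [add_smul, ← h, sq]; abel
  linear_combination (smul_eq_zero.1 hv_smul).resolve_right hv

theorem norm_eq_sqrt_of_isRoot_charpoly {V : Type*} [Fintype V] [DecidableEq V]
    {A : Matrix V V ℂ} (hskew : Aᵀ = -A) {c : ℝ} (hc : 0 ≤ c) (hA : Aᵀ * A = (c : ℂ) • 1)
    {μ : ℂ} (hμ : A.charpoly.IsRoot μ) : ‖μ‖ = √c := by
  have h := congrArg norm (sq_eq_neg_of_isRoot_charpoly hskew hA hμ)
  rw [norm_pow, norm_neg, Complex.norm_real, Real.norm_of_nonneg hc] at h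
  rw [← h, Real.sqrt_sq (norm_nonneg μ)]

end Matrix

theorem skewEnergy_eq_card_mul_sqrt {V : Type*} [Fintype V] [DecidableEq V]
    {B : Matrix V V ℝ} (hskew : Bᵀ = -B) {c : ℝ} (hc : 0 ≤ c) (hB : Bᵀ * B = c • 1) :
    skewEnergy B = Fintype.card V * √c := by
  set A := B.map Complex.ofReal
  have hAskew : Aᵀ = -A := by
    rw [← transpose_map, hskew]; ext; simp [A]
  have hA : Aᵀ * A = (c : ℂ) • 1 := by
    change Bᵀ.map Complex.ofRealHom * B.map Complex.ofRealHom = _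
    rw [← Matrix.map_mul, hB]; ext i j
    by_cases h : i = j <;> simp [one_apply, h]
  have hroots : ∀ μ ∈ A.charpoly.roots, ‖μ‖ = √c := fun μ hμ =>
    norm_eq_sqrt_of_isRoot_charpoly hAskew hc hA (isRoot_of_mem_roots hμ)
  rw [skewEnergy, Multiset.map_congr rfl hroots, Multiset.map_const', Multiset.sum_replicate,
    nsmul_eq_mul, IsAlgClosed.card_roots_eq_natDegree, charpoly_natDegree_eq_dim]

/-- Skew energy of the oriented Kronecker product with a bipartite factor: if
`S₁ = [[0, M], [-Mᵀ, 0]]` (the skew-adjacency matrix of an oriented bipartite graph of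
order `m = a + b`) satisfies `S₁ᵀ S₁ = k I` and `S₂` is skew-symmetric of order `n` with
`S₂ᵀ S₂ = ℓ I`, then the sign-modified Kronecker product
`B = [[0, M ⊗ S₂], [-(M ⊗ S₂)ᵀ, 0]]` is skew-symmetric with `Bᵀ B = kℓ I`; hence the
oriented graph `(H^τ ⊗ G^σ)^o` has optimum skew energy `mn √(kℓ)`. -/
theorem kronecker_bipartite_optimum {a b n : ℕ}
    (M : Matrix (Fin a) (Fin b) ℝ) (S₂ : Matrix (Fin n) (Fin n) ℝ) (k ℓ : ℕ)
    (hS₁ : (Matrix.fromBlocks 0 M (-Mᵀ) 0)ᵀ * Matrix.fromBlocks 0 M (-Mᵀ) 0 =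
      (k : ℝ) • (1 : Matrix (Fin a ⊕ Fin b) (Fin a ⊕ Fin b) ℝ))
    (hS₂skew : S₂ᵀ = -S₂)
    (hS₂ : S₂ᵀ * S₂ = (ℓ : ℝ) • (1 : Matrix (Fin n) (Fin n) ℝ)) :
    (Matrix.fromBlocks 0 (M ⊗ₖ S₂) (-(M ⊗ₖ S₂)ᵀ) 0)ᵀ =
      -(Matrix.fromBlocks 0 (M ⊗ₖ S₂) (-(M ⊗ₖ S₂)ᵀ) 0) ∧
    (Matrix.fromBlocks 0 (M ⊗ₖ S₂) (-(M ⊗ₖ S₂)ᵀ) 0)ᵀ *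
        Matrix.fromBlocks 0 (M ⊗ₖ S₂) (-(M ⊗ₖ S₂)ᵀ) 0 =
      ((k * ℓ : ℕ) : ℝ) •
        (1 : Matrix ((Fin a × Fin n) ⊕ (Fin b × Fin n))
          ((Fin a × Fin n) ⊕ (Fin b × Fin n)) ℝ) ∧
    skewEnergy (Matrix.fromBlocks 0 (M ⊗ₖ S₂) (-(M ⊗ₖ S₂)ᵀ) 0) =
      (((a + b) * n : ℕ) : ℝ) * Real.sqrt ((k * ℓ : ℕ) : ℝ) := by
  have hskew := transpose_fromBlocks_zero_neg_transpose (M ⊗ₖ S₂)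
  obtain ⟨hMMt, hMtM⟩ :=
    (transpose_fromBlocks_zero_neg_transpose_mul_self_eq_smul_one_iff M _).1 hS₁
  have hS₂S₂t : S₂ * S₂ᵀ = (ℓ : ℝ) • 1 :=
    (mul_transpose_self_eq_transpose_mul_self_of_transpose_eq_neg hS₂skew).trans hS₂
  have horth : (Matrix.fromBlocks 0 (M ⊗ₖ S₂) (-(M ⊗ₖ S₂)ᵀ) 0)ᵀ *
      Matrix.fromBlocks 0 (M ⊗ₖ S₂) (-(M ⊗ₖ S₂)ᵀ) 0 = ((k * ℓ : ℕ) : ℝ) • 1 := by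
    rw [transpose_fromBlocks_zero_neg_transpose_mul_self_eq_smul_one_iff, Nat.cast_mul]
    exact ⟨kronecker_mul_transpose_kronecker hMMt hS₂S₂t,
      transpose_kronecker_mul_kronecker hMtM hS₂⟩
  refine ⟨hskew, horth, ?_⟩
  rw [skewEnergy_eq_card_mul_sqrt hskew (Nat.cast_nonneg _) horth]
  simp [add_mul]
end
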